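/- arXiv:2208.02708 — 5 statements merged into one kernel-verified Lean document; each statement's English description precedes it below -/
import Mathlib

section
/- Let N ≥ 1, let Δ₊ ⊆ ℝ^N be a compact convex set with nonempty interior, let κ_P be an interior point of Δ₊, and let w : ℝ^N → ℝ be continuous with w(λ) > 0 for all λ ∈ Δ₊. Set V_w := ∫_{Δ₊} w dλ and b_w := (1/V_w) ∫_{Δ₊} λ w(λ) dλ. Let V ⊆ ℝ^N be a closed convex cone with lineality space V_z := V ∩ (−V) and let pr_z denote the orthogonal projection onto V_z. Assume b_w − κ_P lies in the relative interior of the cone (−V)^∨ := {y ∈ ℝ^N : ⟨ξ, y⟩ ≤ 0 for all ξ ∈ V}. Then there exists ε₀ > 0 such that for every concave Lebesgue-integrable f : Δ₊ → ℝ satisfying (a) at Lebesgue-a.e. interior point λ of Δ₊, f is differentiable at λ and ∇f(λ) ∈ V, (b) f admits a supergradient v at κ_P with v ∈ V and pr_z(v) = 0, and (c) sup_{Δ₊} f = 0, one has D_w(f) ≥ ε₀ · J_w(f), where D_w(f) := f(κ_P) − (1/V_w)∫_{Δ₊} f w dλ and J_w(f) := sup_{Δ₊} f − (1/V_w)∫_{Δ₊}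 f w dλ. -/
open MeasureTheory
open scoped RealInnerProductSpace


lemma aux_span_dual {N : ℕ} (V : Set (EuclideanSpace ℝ (Fin N)))
    (hVclosed : IsClosed V) (hVconv : Convex ℝ V)
    (hVcone : ∀ c : ℝ, 0 ≤ c → ∀ x ∈ V, c • x ∈ V) (hVne : V.Nonempty)
    {v : EuclideanSpace ℝ (Fin N)} (hvperp : v ∈ (Submodule.span ℝ (V ∩ -V))ᗮ) :
    v ∈ Submodule.span ℝ {y : EuclideanSpace ℝ (Fin N) | ∀ ξ ∈ V, ⟪ξ, y⟫ ≤ 0} := by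
  set C : Set (EuclideanSpace ℝ (Fin N)) := {y : EuclideanSpace ℝ (Fin N) | ∀ ξ ∈ V, ⟪ξ, y⟫ ≤ 0} with hC
  -- the cone -V
  set K : ConvexCone ℝ (EuclideanSpace ℝ (Fin N)) :=
    { carrier := -V
      smul_mem' := by
        intro c hc x hx
        rw [Set.mem_neg] at hx ⊢
        have := hVcone c hc.le _ hx
        simpa [smul_neg] using this
      add_mem' := by
        intro x hx y hy
        rw [Set.mem_neg] at hx hy ⊢
        have h1 : (1/2 : ℝ) • (-x) + (1/2 : ℝ) • (-y) ∈ V :=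
          hVconv hx hy (by norm_num) (by norm_num) (by norm_num)
        have h2 := hVcone 2 (by norm_num) _ h1
        have : (2:ℝ) • ((1/2 : ℝ) • (-x) + (1/2 : ℝ) • (-y)) = -(x+y) := by
          rw [smul_add, smul_smul, smul_smul]
          norm_num
          module
        rwa [this] at h2 } with hK
  have hKcoe : (K : Set (EuclideanSpace ℝ (Fin N))) = -V := rfl
  obtain ⟨x₁, hx₁⟩ := id hVne
  let P : ProperCone ℝ (EuclideanSpace ℝ (Fin N)) :=
    { toSubmodule :=
        { carrier := -V
          add_mem' := fun hx hy => K.add_mem' hx hy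
          zero_mem' := by
            rw [Set.mem_neg, neg_zero]
            simpa using hVcone 0 le_rfl _ hx₁
          smul_mem' := by
            intro c x hx
            rw [Set.mem_neg] at hx ⊢
            have := hVcone c c.2 _ hx
            rw [← smul_neg]
            exact this }
      isClosed' := hVclosed.neg }
  have hCdual : C = (ProperCone.innerDual (-V : Set (EuclideanSpace ℝ (Fin N))) : Set (EuclideanSpace ℝ (Fin N))) := by
    ext y
    simp only [hC, Set.mem_setOf_eq, SetLike.mem_coe, ProperCone.mem_innerDual]
    constructor
    · intro h x hx
      rw [Set.mem_neg] at hx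
      have := h _ hx
      rw [inner_neg_left] at this
      linarith
    · intro h ξ hξ
      have := @h (-ξ) (by rwa [Set.mem_neg, neg_neg])
      rw [inner_neg_left] at this
      linarith
  obtain ⟨x₀, hx₀⟩ := hVne
  have hbip := ProperCone.innerDual_innerDual P
  have hbipset : (ProperCone.innerDual (ProperCone.innerDual (-V : Set (EuclideanSpace ℝ (Fin N))) : Set (EuclideanSpace ℝ (Fin N))) : Set (EuclideanSpace ℝ (Fin N))) = -V := by
    exact congrArg (fun Q : ProperCone ℝ (EuclideanSpace ℝ (Fin N)) => (Q : Set (EuclideanSpace ℝ (Fin N)))) hbip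
  -- (span C)ᗮ ≤ span (V ∩ -V)
  have hkey : (Submodule.span ℝ C)ᗮ ≤ Submodule.span ℝ (V ∩ -V) := by
    intro u hu
    have h1 : ∀ y ∈ C, ⟪y, u⟫ = 0 := fun y hy =>
      (Submodule.mem_orthogonal _ u).mp hu y (Submodule.subset_span hy)
    have hud : u ∈ (ProperCone.innerDual (ProperCone.innerDual (-V : Set (EuclideanSpace ℝ (Fin N))) : Set (EuclideanSpace ℝ (Fin N))) : Set (EuclideanSpace ℝ (Fin N))) := by
      rw [SetLike.mem_coe, ProperCone.mem_innerDual]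
      intro x hx
      rw [← hCdual] at hx
      exact (h1 x hx).ge
    have hud' : -u ∈ (ProperCone.innerDual (ProperCone.innerDual (-V : Set (EuclideanSpace ℝ (Fin N))) : Set (EuclideanSpace ℝ (Fin N))) : Set (EuclideanSpace ℝ (Fin N))) := by
      rw [SetLike.mem_coe, ProperCone.mem_innerDual]
      intro x hx
      rw [← hCdual] at hx
      rw [inner_neg_right, (h1 x hx)]
      simp
    rw [hbipset] at hud hud'
    have huV : u ∈ V := by rwa [Set.mem_neg, neg_neg] at hud'
    exact Submodule.subset_span ⟨huV, hud⟩
  have := Submodule.orthogonal_le hkey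
  rw [Submodule.orthogonal_orthogonal] at this
  exact this hvperp


lemma aux_delta {N : ℕ} (V : Set (EuclideanSpace ℝ (Fin N)))
    (hVclosed : IsClosed V) (hVconv : Convex ℝ V)
    (hVcone : ∀ c : ℝ, 0 ≤ c → ∀ x ∈ V, c • x ∈ V) (hVne : V.Nonempty)
    (y₀ : EuclideanSpace ℝ (Fin N))
    (hbary : y₀ ∈ intrinsicInterior ℝ
      {y : EuclideanSpace ℝ (Fin N) | ∀ ξ ∈ V, ⟪ξ, y⟫ ≤ 0}) :
    ∃ δ : ℝ, 0 < δ ∧ ∀ v ∈ V, v ∈ (Submodule.span ℝ (V ∩ -V))ᗮ →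
      ⟪v, y₀⟫ ≤ -(δ * ‖v‖) := by
  classical
  set C : Set (EuclideanSpace ℝ (Fin N)) :=
    {y : EuclideanSpace ℝ (Fin N) | ∀ ξ ∈ V, ⟪ξ, y⟫ ≤ 0} with hC
  rw [intrinsicInterior] at hbary
  obtain ⟨x, hx, hxe⟩ := hbary
  rw [mem_interior_iff_mem_nhds, Metric.mem_nhds_iff] at hx
  obtain ⟨ε, hε, hball⟩ := hx
  refine ⟨ε/2, by positivity, ?_⟩
  intro v hvV hvperp
  rcases eq_or_ne v 0 with rfl | hv0
  · simp
  have hvnorm : (0:ℝ) < ‖v‖ := norm_pos_iff.mpr hv0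
  set u : EuclideanSpace ℝ (Fin N) := ((ε/2) / ‖v‖) • v with hu
  have hvspan : v ∈ Submodule.span ℝ C :=
    aux_span_dual V hVclosed hVconv hVcone hVne hvperp
  have hu_dir : u ∈ (affineSpan ℝ C).direction := by
    rw [direction_affineSpan]
    refine Submodule.smul_mem _ _ ?_
    have hCsub : C ⊆ (vectorSpan ℝ C : Set (EuclideanSpace ℝ (Fin N))) := by
      intro y hy
      have h0C : (0 : EuclideanSpace ℝ (Fin N)) ∈ C := by
        intro ξ hξ; simp
      have := vsub_mem_vectorSpan ℝ hy h0C
      simpa using this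
    exact (Submodule.span_le.mpr hCsub) hvspan
  have hxmem : ((x : EuclideanSpace ℝ (Fin N)) + u) ∈ affineSpan ℝ C := by
    have := AffineSubspace.vadd_mem_of_mem_direction hu_dir x.2
    simpa [add_comm] using this
  set x' : affineSpan ℝ C := ⟨(x : EuclideanSpace ℝ (Fin N)) + u, hxmem⟩ with hx'
  have hx'ball : x' ∈ Metric.ball x ε := by
    rw [Metric.mem_ball, Subtype.dist_eq]
    have : dist ((x : EuclideanSpace ℝ (Fin N)) + u) (x : EuclideanSpace ℝ (Fin N)) = ‖u‖ := by
      rw [dist_eq_norm]; congr 1; abel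
    rw [hx', this, hu, norm_smul]
    rw [Real.norm_eq_abs, abs_of_pos (by positivity)]
    rw [div_mul_cancel₀ _ (ne_of_gt hvnorm)]
    linarith
  have hmemC : ((x : EuclideanSpace ℝ (Fin N)) + u) ∈ C := hball hx'ball
  have hineq := hmemC v hvV
  rw [hxe] at hineq
  rw [inner_add_right] at hineq
  have hinner_u : ⟪v, u⟫ = (ε/2) * ‖v‖ := by
    rw [hu, real_inner_smul_right, real_inner_self_eq_norm_sq]
    field_simp
  linarith [hineq, hinner_u]

/-- the paper's Lemma 6.1. Under the barycenter condition
`b_w - κ_P ∈ RelInt((-V)^∨)`, there is `ε₀ > 0` such that `D_w(f) ≥ ε₀ · J_w(f)` for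
every concave integrable `f` on `Δ₊` whose gradient lies a.e. in the valuation cone `V`,
which admits a supergradient `v ∈ V` at `κ_P` orthogonal to the lineality space
`V_z = V ∩ (-V)` (i.e. `pr_z(v) = 0`), and with `sup_{Δ₊} f = 0`. -/
theorem stmt2 (N : ℕ) (hN : 1 ≤ N)
    (Δ : Set (EuclideanSpace ℝ (Fin N)))
    (hΔcomp : IsCompact Δ) (hΔconv : Convex ℝ Δ) (hΔint : (interior Δ).Nonempty)
    (κ : EuclideanSpace ℝ (Fin N)) (hκ : κ ∈ interior Δ)
    (w : EuclideanSpace ℝ (Fin N) → ℝ) (hw : Continuous w)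
    (hwpos : ∀ lam ∈ Δ, 0 < w lam)
    (Vw : ℝ) (hVw : Vw = ∫ lam in Δ, w lam)
    (b : EuclideanSpace ℝ (Fin N))
    (hb : b = (1 / Vw) • ∫ lam in Δ, w lam • lam)
    (V : Set (EuclideanSpace ℝ (Fin N)))
    (hVclosed : IsClosed V) (hVconv : Convex ℝ V)
    (hVcone : ∀ c : ℝ, 0 ≤ c → ∀ x ∈ V, c • x ∈ V)
    (hbary : b - κ ∈ intrinsicInterior ℝ
      {y : EuclideanSpace ℝ (Fin N) | ∀ ξ ∈ V, ⟪ξ, y⟫ ≤ 0}) :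
    ∃ ε₀ : ℝ, 0 < ε₀ ∧
      ∀ f : EuclideanSpace ℝ (Fin N) → ℝ,
        ConcaveOn ℝ Δ f → IntegrableOn f Δ →
        (∀ᵐ lam ∂(volume.restrict (interior Δ)),
          DifferentiableAt ℝ f lam ∧ gradient f lam ∈ V) →
        (∃ v ∈ V, v ∈ (Submodule.span ℝ (V ∩ -V))ᗮ ∧
          ∀ lam ∈ Δ, f lam ≤ f κ + ⟪v, lam - κ⟫) →
        sSup (f '' Δ) = 0 →
        ε₀ * (sSup (f '' Δ) - (1 / Vw) * ∫ lam in Δ, f lam * w lam) ≤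
          f κ - (1 / Vw) * ∫ lam in Δ, f lam * w lam := by
  classical
  rcases Set.eq_empty_or_nonempty V with hVemp | hVne
  · refine ⟨1, one_pos, ?_⟩
    intro f _ _ _ hv _
    obtain ⟨v, hvV, -, -⟩ := hv
    simp [hVemp] at hvV
  obtain ⟨R, hR⟩ := hΔcomp.isBounded.subset_closedBall κ
  set R' := max R 1 with hR'
  have hR'pos : (0:ℝ) < R' := lt_of_lt_of_le one_pos (le_max_right _ _)
  have hRsub : Δ ⊆ Metric.closedBall κ R' :=
    hR.trans (Metric.closedBall_subset_closedBall (le_max_left _ _))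
  obtain ⟨δ, hδpos, hδ⟩ := aux_delta V hVclosed hVconv hVcone hVne (b - κ) hbary
  have hΔmeas := hΔcomp.measurableSet
  have hΔne : Δ.Nonempty := hΔint.mono interior_subset
  have hμΔ : volume Δ ≠ ⊤ := hΔcomp.measure_lt_top.ne
  have hμpos : 0 < volume Δ := by
    have h1 : 0 < volume (interior Δ) := isOpen_interior.measure_pos volume hΔint
    exact h1.trans_le (measure_mono interior_subset)
  have hvol : 0 < (volume Δ).toReal := ENNReal.toReal_pos hμpos.ne' hμΔ
  have hwint : IntegrableOn w Δ := hw.continuousOn.integrableOn_compact hΔcomp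
  have hVwpos : 0 < Vw := by
    obtain ⟨z, hzΔ, hzmin⟩ := hΔcomp.exists_isMinOn hΔne hw.continuousOn
    have hge : w z * (volume Δ).toReal ≤ _ := setIntegral_ge_of_const_le_real hΔmeas hμΔ
      (fun x hx => isMinOn_iff.mp hzmin x hx) hwint
    have : 0 < w z * (volume Δ).toReal := mul_pos (hwpos z hzΔ) hvol
    rw [hVw]; linarith
  refine ⟨δ / (R' + δ), by positivity, ?_⟩
  intro f hconc hfint hgrad hex hsup
  obtain ⟨v, hvV, hvperp, hvsg⟩ := hex
  obtain ⟨Cw, hCw⟩ := hΔcomp.exists_bound_of_continuousOn hw.continuousOn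
  have hfw_int : IntegrableOn (fun lam => f lam * w lam) Δ := by
    have h := Integrable.bdd_mul (c := Cw) hfint hw.aestronglyMeasurable.restrict
      (by filter_upwards [ae_restrict_mem hΔmeas] with x hx using hCw x hx)
    simpa [mul_comm, IntegrableOn] using h
  have hg_cont : Continuous
      (fun lam : EuclideanSpace ℝ (Fin N) => (f κ + ⟪v, lam - κ⟫) * w lam) :=
    (continuous_const.add (continuous_const.inner (continuous_id.sub continuous_const))).mul hw
  have hg_int : IntegrableOn
      (fun lam : EuclideanSpace ℝ (Fin N) => (f κ + ⟪v, lam - κ⟫) * w lam) Δ :=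
    hg_cont.continuousOn.integrableOn_compact hΔcomp
  have hmono : (∫ lam in Δ, f lam * w lam) ≤ ∫ lam in Δ, (f κ + ⟪v, lam - κ⟫) * w lam :=
    setIntegral_mono_on hfw_int hg_int hΔmeas
      (fun lam hlam => mul_le_mul_of_nonneg_right (hvsg lam hlam) (hwpos lam hlam).le)
  have hwsmul_int : IntegrableOn
      (fun lam : EuclideanSpace ℝ (Fin N) => w lam • lam) Δ :=
    (hw.smul continuous_id).continuousOn.integrableOn_compact hΔcomp
  have hinner_int : IntegrableOn
      (fun lam : EuclideanSpace ℝ (Fin N) => ⟪v, w lam • lam⟫) Δ :=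
    (continuous_const.inner (hw.smul continuous_id)).continuousOn.integrableOn_compact hΔcomp
  have hRHS : (∫ lam in Δ, (f κ + ⟪v, lam - κ⟫) * w lam) = Vw * (f κ + ⟪v, b - κ⟫) := by
    have hsplit : (fun lam : EuclideanSpace ℝ (Fin N) => (f κ + ⟪v, lam - κ⟫) * w lam)
        = fun lam => (f κ - ⟪v, κ⟫) * w lam + ⟪v, w lam • lam⟫ := by
      funext lam
      rw [inner_sub_right, real_inner_smul_right]
      ring
    rw [hsplit, integral_add (hwint.const_mul _) hinner_int, integral_const_mul,
      integral_inner (𝕜 := ℝ) hwsmul_int v]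
    have hbv : ⟪v, (∫ lam in Δ, w lam • lam : EuclideanSpace ℝ (Fin N))⟫ = Vw * ⟪v, b⟫ := by
      rw [hb, real_inner_smul_right]
      field_simp
    rw [hbv, inner_sub_right, ← hVw]
    ring
  have hA : (1/Vw) * (∫ lam in Δ, f lam * w lam) ≤ f κ + ⟪v, b - κ⟫ := by
    have h := mul_le_mul_of_nonneg_left (hmono.trans hRHS.le)
      (by positivity : (0:ℝ) ≤ 1/Vw)
    calc (1/Vw) * (∫ lam in Δ, f lam * w lam)
        ≤ (1/Vw) * (Vw * (f κ + ⟪v, b - κ⟫)) := h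
      _ = f κ + ⟪v, b - κ⟫ := by field_simp
  have hfub : ∀ y ∈ f '' Δ, y ≤ f κ + R' * ‖v‖ := by
    rintro y ⟨lam, hlam, rfl⟩
    have h1 := hvsg lam hlam
    have h2 : ⟪v, lam - κ⟫ ≤ ‖v‖ * ‖lam - κ‖ := real_inner_le_norm v _
    have h3 : ‖lam - κ‖ ≤ R' := by
      have h4 := hRsub hlam
      rw [Metric.mem_closedBall, dist_eq_norm] at h4
      exact h4
    nlinarith [norm_nonneg v]
  have h0 : 0 ≤ f κ + R' * ‖v‖ := by
    have h5 := csSup_le (hΔne.image f) hfub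
    rw [hsup] at h5
    linarith
  have hδv := hδ v hvV hvperp
  rw [hsup]
  set A := (1/Vw) * ∫ lam in Δ, f lam * w lam with hAdef
  have hkey : A ≤ f κ - δ * ‖v‖ := by
    have := hA
    linarith
  rw [div_mul_eq_mul_div, div_le_iff₀ (by positivity : (0:ℝ) < R' + δ)]
  nlinarith [mul_nonneg hδpos.le h0, mul_le_mul_of_nonneg_left hkey hR'pos.le]
end

section
/- Let N ≥ 1, let Δ₊ ⊆ ℝ^N be a compact convex set with nonempty interior, let κ_P be an interior point of Δ₊, and let w : ℝ^N → ℝ be continuous with w(λ) > 0 for all λ ∈ Δ₊. Set V_w := ∫_{Δ₊} w dλ and b_w := (1/V_w) ∫_{Δ₊} λ w(λ) dλ. Let V ⊆ ℝ^N be a closed convex cone with lineality space V_z := V ∩ (−V). Assume b_w − κ_P lies in the relative interior of (−V)^∨ := {y ∈ ℝ^N : ⟨ξ, y⟩ ≤ 0 for all ξ ∈ V}. Then there exists ε₀ > 0 such that for every function f : Δ₊ → ℝ of the form f(λ) = min_{1≤a≤m}(C_a + ⟨Λ_a, λ⟩) with all slopes Λ_a ∈ V, one has D_w(f) ≥ ε₀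 · inf_{ζ ∈ V_z} J_w(f − ⟨ζ, ·⟩), where D_w(f) := f(κ_P) − (1/V_w)∫_{Δ₊} f w dλ and J_w(h) := sup_{Δ₊} h − (1/V_w)∫_{Δ₊} h w dλ. -/
open MeasureTheory
open scoped RealInnerProductSpace

section Aux
variable {H : Type*} [NormedAddCommGroup H] [InnerProductSpace ℝ H] [FiniteDimensional ℝ H]

/-- Bipolar: the orthogonal complement of the span of the dual cone of a
nonempty closed convex cone `V` is contained in the lineality space `V ∩ -V`. -/
lemma aux_bipolar (V : Set H) (hVclosed : IsClosed V) (hVconv : Convex ℝ V)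
    (hVcone : ∀ c : ℝ, 0 ≤ c → ∀ x ∈ V, c • x ∈ V) (hVne : V.Nonempty) :
    ∀ x ∈ (Submodule.span ℝ {y : H | ∀ ξ ∈ V, ⟪ξ, y⟫ ≤ 0})ᗮ, x ∈ V ∩ -V := by
  intro x hx
  set C : Set H := {y : H | ∀ ξ ∈ V, ⟪ξ, y⟫ ≤ 0} with hC
  have hxC : ∀ y ∈ C, ⟪y, x⟫ = 0 := fun y hy =>
    (Submodule.mem_orthogonal _ x).mp hx y (Submodule.subset_span hy)
  have hadd : ∀ u ∈ V, ∀ v ∈ V, u + v ∈ V := by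
    intro u hu v hv
    have h2 : ((2:ℝ)) • ((1/2 : ℝ) • u + (1/2 : ℝ) • v) ∈ V := by
      refine hVcone 2 (by norm_num) _ ?_
      exact hVconv hu hv (by norm_num) (by norm_num) (by norm_num)
    have : ((2:ℝ)) • ((1/2 : ℝ) • u + (1/2 : ℝ) • v) = u + v := by
      rw [smul_add, smul_smul, smul_smul]; norm_num
    rwa [this] at h2
  let K : ConvexCone ℝ H :=
    { carrier := -V
      smul_mem' := by
        intro c hc y hy
        rw [Set.mem_neg] at hy ⊢
        have := hVcone c hc.le _ hy
        rwa [smul_neg] at this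
      add_mem' := by
        intro u hu v hv
        rw [Set.mem_neg] at hu hv ⊢
        have := hadd _ hu _ hv
        rwa [show -u + -v = -(u+v) by abel] at this }
  have hKne : (K : Set H).Nonempty := by
    obtain ⟨v, hv⟩ := hVne
    exact ⟨-v, by simpa [K, Set.mem_neg] using hv⟩
  have hKclosed : IsClosed (K : Set H) := hVclosed.neg
  have hKpt : K.Pointed := by
    obtain ⟨v, hv⟩ := hVne
    change (0 : H) ∈ -V
    rw [Set.mem_neg, neg_zero]
    simpa using hVcone 0 le_rfl v hv
  let P : ProperCone ℝ H := { toSubmodule := K.toPointedCone hKpt, isClosed' := hKclosed }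
  have hmem : ∀ z : H, (∀ y ∈ C, 0 ≤ ⟪y, z⟫) → z ∈ -V := by
    intro z hz
    by_contra hzn
    obtain ⟨y, hy, hneg⟩ := ProperCone.hyperplane_separation' P (x₀ := z) hzn
    have hyC : y ∈ C := by
      intro ξ hξ
      have hm : -ξ ∈ P := by
        change -ξ ∈ -V
        simpa [Set.mem_neg] using hξ
      have := hy (-ξ) hm
      rw [inner_neg_left] at this; linarith
    have := hz y hyC
    rw [real_inner_comm] at this
    linarith
  have hx1 : x ∈ -V := hmem x (fun y hy => (hxC y hy).ge)
  have hx2 : -x ∈ -V := hmem (-x) (fun y hy => by rw [inner_neg_right, hxC y hy, neg_zero])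
  rw [Set.mem_neg, neg_neg] at hx2
  exact ⟨hx2, hx1⟩

/-- Quantitative consequence of the relative-interior barycenter condition. -/
lemma aux_relint (V : Set H) (x₀ : H)
    (hbary : x₀ ∈ intrinsicInterior ℝ {y : H | ∀ ξ ∈ V, ⟪ξ, y⟫ ≤ 0}) :
    ∃ ε : ℝ, 0 < ε ∧ ∀ ξ ∈ V,
      ⟪ξ, x₀⟫ ≤ -(ε * ‖((Submodule.orthogonalProjectionOnto
        (Submodule.span ℝ {y : H | ∀ ξ' ∈ V, ⟪ξ', y⟫ ≤ 0}) ξ) : H)‖) := by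
  set C : Set H := {y : H | ∀ ξ' ∈ V, ⟪ξ', y⟫ ≤ 0} with hCdef
  set W : Submodule ℝ H := Submodule.span ℝ C with hWdef
  obtain ⟨y, hy, hyx⟩ := mem_intrinsicInterior.mp hbary
  rw [mem_interior_iff_mem_nhds, Metric.mem_nhds_iff] at hy
  obtain ⟨δ, hδ, hball⟩ := hy
  have hx₀C : x₀ ∈ C := intrinsicInterior_subset hbary
  have h0C : (0 : H) ∈ C := fun ξ _ => by simp
  have hCW : C ⊆ (vectorSpan ℝ C : Set H) := by
    intro c hc
    have := vsub_mem_vectorSpan ℝ hc h0C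
    simpa using this
  have hWle : W ≤ vectorSpan ℝ C := Submodule.span_le.mpr hCW
  have key : ∀ u ∈ W, ‖u‖ < δ → x₀ + u ∈ C := by
    intro u hu hun
    have hmem : x₀ + u ∈ affineSpan ℝ C := by
      have h1 : u +ᵥ x₀ ∈ affineSpan ℝ C := by
        refine AffineSubspace.vadd_mem_of_mem_direction ?_ (subset_affineSpan ℝ C hx₀C)
        rw [direction_affineSpan]
        exact hWle hu
      simpa [add_comm] using h1
    have hb : (⟨x₀ + u, hmem⟩ : affineSpan ℝ C) ∈ Metric.ball y δ := by
      rw [Metric.mem_ball, Subtype.dist_eq, hyx]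
      simpa [dist_eq_norm] using hun
    exact hball hb
  refine ⟨δ / 2, by linarith, ?_⟩
  intro ξ hξ
  set p : H := ((Submodule.orthogonalProjectionOnto W ξ) : H) with hpdef
  have hpW : p ∈ W := SetLike.coe_mem _
  have hinner_p : ⟪ξ, p⟫ = ‖p‖ ^ 2 := by
    have horth : ξ - p ∈ Wᗮ := Submodule.sub_starProjection_mem_orthogonal (K := W) ξ
    have h0 : ⟪p, ξ - p⟫ = 0 := (Submodule.mem_orthogonal W (ξ - p)).mp horth p hpW
    have : ⟪ξ - p, p⟫ = 0 := by rwa [real_inner_comm] at h0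
    have hexp : ⟪ξ, p⟫ = ⟪ξ - p, p⟫ + ⟪p, p⟫ := by
      rw [← inner_add_left, sub_add_cancel]
    rw [hexp, this, zero_add, real_inner_self_eq_norm_sq]
  rcases eq_or_ne p 0 with hp | hp
  · rw [hp, norm_zero, mul_zero, neg_zero]
    exact hx₀C ξ hξ
  · have hpn : 0 < ‖p‖ := norm_pos_iff.mpr hp
    set u : H := ((δ / 2) * ‖p‖⁻¹) • p with hudef
    have huW : u ∈ W := W.smul_mem _ hpW
    have hun : ‖u‖ < δ := by
      rw [hudef, norm_smul, Real.norm_eq_abs, abs_of_pos (by positivity)]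
      rw [mul_assoc, inv_mul_cancel₀ hpn.ne', mul_one]
      linarith
    have hin : ⟪ξ, x₀ + u⟫ ≤ 0 := key u huW hun ξ hξ
    rw [inner_add_right] at hin
    have hiu : ⟪ξ, u⟫ = (δ / 2) * ‖p‖ := by
      rw [hudef, real_inner_smul_right, hinner_p]
      field_simp
    linarith [hin, hiu.le, hiu.ge]

end Aux

set_option maxHeartbeats 1600000

/-- combinatorial form of (1) ⇒ (2) in the paper's Theorem 1.3.
Under the barycenter condition `b_w - κ_P ∈ RelInt((-V)^∨)`, there is `ε₀ > 0` such that
for every piecewise linear concave `f = min_a (C_a + ⟨Λ_a, ·⟩)` with slopes `Λ_a ∈ V`,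
`D_w(f) ≥ ε₀ · inf_{ζ ∈ V_z} J_w(f - ⟨ζ, ·⟩)`, where `V_z = V ∩ (-V)` is the lineality
space of the valuation cone `V` (uniform `g`-Ding stability). -/
theorem stmt3 (N : ℕ) (hN : 1 ≤ N)
    (Δ : Set (EuclideanSpace ℝ (Fin N)))
    (hΔcomp : IsCompact Δ) (hΔconv : Convex ℝ Δ) (hΔint : (interior Δ).Nonempty)
    (κ : EuclideanSpace ℝ (Fin N)) (hκ : κ ∈ interior Δ)
    (w : EuclideanSpace ℝ (Fin N) → ℝ) (hw : Continuous w)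
    (hwpos : ∀ lam ∈ Δ, 0 < w lam)
    (Vw : ℝ) (hVw : Vw = ∫ lam in Δ, w lam)
    (b : EuclideanSpace ℝ (Fin N))
    (hb : b = (1 / Vw) • ∫ lam in Δ, w lam • lam)
    (V : Set (EuclideanSpace ℝ (Fin N)))
    (hVclosed : IsClosed V) (hVconv : Convex ℝ V)
    (hVcone : ∀ c : ℝ, 0 ≤ c → ∀ x ∈ V, c • x ∈ V)
    (hbary : b - κ ∈ intrinsicInterior ℝ
      {y : EuclideanSpace ℝ (Fin N) | ∀ ξ ∈ V, ⟪ξ, y⟫ ≤ 0}) :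
    ∃ ε₀ : ℝ, 0 < ε₀ ∧
      ∀ (m : ℕ) (C : Fin (m + 1) → ℝ) (Λ : Fin (m + 1) → EuclideanSpace ℝ (Fin N)),
        (∀ a, Λ a ∈ V) →
        ∀ f : EuclideanSpace ℝ (Fin N) → ℝ,
        (∀ lam, f lam = Finset.univ.inf' Finset.univ_nonempty
          (fun a => C a + ⟪Λ a, lam⟫)) →
        ε₀ * sInf ((fun ζ =>
            sSup ((fun lam => f lam - ⟪ζ, lam⟫) '' Δ) -
              (1 / Vw) * ∫ lam in Δ, (f lam - ⟪ζ, lam⟫) * w lam) '' (V ∩ -V)) ≤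
          f κ - (1 / Vw) * ∫ lam in Δ, f lam * w lam := by
  classical
  by_cases hVne : V.Nonempty
  swap
  · refine ⟨1, one_pos, ?_⟩
    intro m C Λ hΛ f hf
    exact absurd ⟨Λ 0, hΛ 0⟩ hVne
  have hmeas : MeasurableSet Δ := hΔcomp.isClosed.measurableSet
  have hΔne : Δ.Nonempty := ⟨κ, interior_subset hκ⟩
  -- integrability of w
  have hIw : IntegrableOn w Δ := hw.continuousOn.integrableOn_compact hΔcomp
  -- Vw > 0
  have hVw0 : 0 < Vw := by
    rw [hVw]
    have hnn : 0 ≤ᵐ[volume.restrict Δ] w :=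
      (ae_restrict_iff' hmeas).mpr (ae_of_all _ fun x hx => (hwpos x hx).le)
    rw [setIntegral_pos_iff_support_of_nonneg_ae hnn hIw]
    have hsub : interior Δ ⊆ Function.support w ∩ Δ := fun x hx =>
      ⟨(hwpos x (interior_subset hx)).ne', interior_subset hx⟩
    refine lt_of_lt_of_le ?_ (measure_mono hsub)
    obtain ⟨x, hx⟩ := hΔint
    exact isOpen_interior.measure_pos volume ⟨x, hx⟩
  -- vector-valued integrability
  have hIv : IntegrableOn (fun lam => w lam • (lam : EuclideanSpace ℝ (Fin N))) Δ :=
    (hw.smul continuous_id).continuousOn.integrableOn_compact hΔcomp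
  have hIvb : (∫ lam in Δ, w lam • (lam : EuclideanSpace ℝ (Fin N))) = Vw • b := by
    rw [hb, smul_smul]
    rw [mul_one_div, div_self hVw0.ne', one_smul]
  -- key computational lemma: weighted integral of a linear form
  have hIb : ∀ Λ : EuclideanSpace ℝ (Fin N), (∫ lam in Δ, ⟪Λ, lam⟫ * w lam) = Vw * ⟪Λ, b⟫ := by
    intro Λ
    have h1 : ∀ lam : EuclideanSpace ℝ (Fin N), ⟪Λ, lam⟫ * w lam = ⟪Λ, w lam • lam⟫ := by
      intro lam; rw [real_inner_smul_right]; ring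
    calc (∫ lam in Δ, ⟪Λ, lam⟫ * w lam) = ∫ lam in Δ, ⟪Λ, w lam • lam⟫ := by
            simp only [h1]
      _ = ⟪Λ, ∫ lam in Δ, w lam • (lam : EuclideanSpace ℝ (Fin N))⟫ := (integral_inner hIv Λ)
      _ = Vw * ⟪Λ, b⟫ := by rw [hIvb, real_inner_smul_right]
  -- dual cone data
  obtain ⟨ε, hε, hkey⟩ := aux_relint V (b - κ) hbary
  have hbipolar := aux_bipolar V hVclosed hVconv hVcone hVne
  set W : Submodule ℝ (EuclideanSpace ℝ (Fin N)) :=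
    Submodule.span ℝ {y : EuclideanSpace ℝ (Fin N) | ∀ ξ' ∈ V, ⟪ξ', y⟫ ≤ 0} with hW
  -- radius bound
  obtain ⟨z, hz, hzmax⟩ := hΔcomp.exists_isMaxOn hΔne
    ((continuous_id.sub continuous_const).norm.continuousOn :
      ContinuousOn (fun lam : EuclideanSpace ℝ (Fin N) => ‖lam - κ‖) Δ)
  set R : ℝ := ‖z - κ‖ with hRdef
  have hRz : ∀ lam ∈ Δ, ‖lam - κ‖ ≤ R := fun lam hlam => hzmax hlam
  have hR0 : 0 ≤ R := norm_nonneg _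
  have hεR : 0 < ε + R := by linarith
  refine ⟨ε / (ε + R), div_pos hε hεR, ?_⟩
  intro m C Λ hΛ f hf
  -- continuity of f
  have hfc : Continuous f := by
    have hfe : f = fun lam => Finset.univ.inf' Finset.univ_nonempty
        (fun a => C a + ⟪Λ a, lam⟫) := funext hf
    rw [hfe]
    refine continuous_iff_continuousAt.mpr fun x => ?_
    exact ContinuousAt.finset_inf'_apply Finset.univ_nonempty fun i _ =>
      ((continuous_const.add ((continuous_const).inner continuous_id)).continuousAt)
  have hIfw : IntegrableOn (fun lam => f lam * w lam) Δ :=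
    (hfc.mul hw).continuousOn.integrableOn_compact hΔcomp
  -- the minimizing index at κ
  obtain ⟨a, -, ha⟩ := Finset.exists_mem_eq_inf' (Finset.univ_nonempty)
    (fun a : Fin (m+1) => C a + ⟪Λ a, κ⟫)
  set ξ : EuclideanSpace ℝ (Fin N) := Λ a with hξdef
  have hfκ : f κ = C a + ⟪ξ, κ⟫ := (hf κ).trans ha
  have hfle : ∀ lam : EuclideanSpace ℝ (Fin N), f lam ≤ C a + ⟪ξ, lam⟫ := fun lam =>
    (hf lam).le.trans (le_of_eq rfl) |>.trans (Finset.inf'_le _ (Finset.mem_univ a))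
  set p : EuclideanSpace ℝ (Fin N) := ((Submodule.orthogonalProjectionOnto W ξ) : EuclideanSpace ℝ (Fin N)) with hpdef
  set ζ : EuclideanSpace ℝ (Fin N) := ξ - p with hζdef
  have hζorth : ζ ∈ Wᗮ := Submodule.sub_starProjection_mem_orthogonal (K := W) ξ
  have hζmem : ζ ∈ V ∩ -V := hbipolar ζ hζorth
  have hζperp : ⟪ζ, b - κ⟫ = 0 := by
    have hbκ : b - κ ∈ {y : EuclideanSpace ℝ (Fin N) | ∀ ξ' ∈ V, ⟪ξ', y⟫ ≤ 0} :=
      intrinsicInterior_subset hbary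
    have : ⟪b - κ, ζ⟫ = 0 :=
      (Submodule.mem_orthogonal W ζ).mp hζorth (b - κ) (Submodule.subset_span hbκ)
    rwa [real_inner_comm] at this
  -- the Ding invariant
  set Dw : ℝ := f κ - (1 / Vw) * ∫ lam in Δ, f lam * w lam with hDw
  -- integrability of the affine comparison
  have hIaw : IntegrableOn (fun lam : EuclideanSpace ℝ (Fin N) => (C a + ⟪ξ, lam⟫) * w lam) Δ :=
    ((continuous_const.add ((continuous_const).inner continuous_id)).mul
      hw).continuousOn.integrableOn_compact hΔcomp
  have hI1 : IntegrableOn (fun lam : EuclideanSpace ℝ (Fin N) => C a * w lam) Δ := hIw.const_mul _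
  have hI2 : ∀ Λ' : EuclideanSpace ℝ (Fin N), IntegrableOn (fun lam : EuclideanSpace ℝ (Fin N) => ⟪Λ', lam⟫ * w lam) Δ := fun Λ' =>
    (((continuous_const).inner continuous_id).mul hw).continuousOn.integrableOn_compact hΔcomp
  have haff : (∫ lam in Δ, (C a + ⟪ξ, lam⟫) * w lam) = C a * Vw + Vw * ⟪ξ, b⟫ := by
    have hexp : ∀ lam : EuclideanSpace ℝ (Fin N), (C a + ⟪ξ, lam⟫) * w lam
        = C a * w lam + ⟪ξ, lam⟫ * w lam := fun lam => by ring
    calc (∫ lam in Δ, (C a + ⟪ξ, lam⟫) * w lam)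
        = ∫ lam in Δ, (C a * w lam + ⟪ξ, lam⟫ * w lam) := by simp only [hexp]
      _ = (∫ lam in Δ, C a * w lam) + ∫ lam in Δ, ⟪ξ, lam⟫ * w lam :=
          integral_add hI1 (hI2 ξ)
      _ = C a * Vw + Vw * ⟪ξ, b⟫ := by
          rw [integral_const_mul, ← hVw, hIb ξ]
  -- lower bound on Dw
  have hD : ε * ‖p‖ ≤ Dw := by
    have hle : (∫ lam in Δ, f lam * w lam) ≤ C a * Vw + Vw * ⟪ξ, b⟫ := by
      rw [← haff]
      exact setIntegral_mono_on hIfw hIaw hmeas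
        (fun x hx => mul_le_mul_of_nonneg_right (hfle x) (hwpos x hx).le)
    have hmean : (1 / Vw) * ∫ lam in Δ, f lam * w lam ≤ C a + ⟪ξ, b⟫ := by
      have := mul_le_mul_of_nonneg_left hle (le_of_lt (by positivity : (0:ℝ) < 1 / Vw))
      calc (1 / Vw) * ∫ lam in Δ, f lam * w lam
          ≤ (1 / Vw) * (C a * Vw + Vw * ⟪ξ, b⟫) := this
        _ = C a + ⟪ξ, b⟫ := by
          rw [mul_add, one_div, mul_comm (C a) Vw, inv_mul_cancel_left₀ hVw0.ne',
            inv_mul_cancel_left₀ hVw0.ne']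
    have hkξ : ⟪ξ, b - κ⟫ ≤ -(ε * ‖p‖) := hkey ξ (hΛ a)
    have hsub : ⟪ξ, b - κ⟫ = ⟪ξ, b⟫ - ⟪ξ, κ⟫ := inner_sub_right _ _ _
    rw [hDw, hfκ]
    linarith
  -- upper bound on J at ζ
  set g : EuclideanSpace ℝ (Fin N) → ℝ := fun lam => f lam - ⟪ζ, lam⟫ with hgdef
  have hgc : Continuous g := hfc.sub ((continuous_const).inner continuous_id)
  set M : ℝ := sSup (g '' Δ) with hM
  have hMle : M ≤ f κ - ⟪ζ, κ⟫ + R * ‖p‖ := by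
    refine csSup_le (hΔne.image g) ?_
    rintro x ⟨lam, hlam, rfl⟩
    have h1 : f lam ≤ C a + ⟪ξ, lam⟫ := hfle lam
    have h2 : ⟪ξ, lam⟫ - ⟪ζ, lam⟫ = ⟪p, lam⟫ := by
      rw [hζdef, inner_sub_left]; ring
    have h3 : ⟪p, lam⟫ = ⟪p, κ⟫ + ⟪p, lam - κ⟫ := by
      rw [inner_sub_right]; ring
    have h4 : ⟪p, lam - κ⟫ ≤ ‖p‖ * ‖lam - κ‖ := real_inner_le_norm _ _
    have h5 : ‖p‖ * ‖lam - κ‖ ≤ ‖p‖ * R := by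
      exact mul_le_mul_of_nonneg_left (hRz lam hlam) (norm_nonneg _)
    have h6 : ⟪ζ, κ⟫ = ⟪ξ, κ⟫ - ⟪p, κ⟫ := by rw [hζdef, inner_sub_left]
    have hfκ' : C a = f κ - ⟪ξ, κ⟫ := by rw [hfκ]; ring
    simp only [hgdef]
    nlinarith [h1, h4, h5]
  have hIgw : (∫ lam in Δ, g lam * w lam)
      = (∫ lam in Δ, f lam * w lam) - Vw * ⟪ζ, b⟫ := by
    have hexp : ∀ lam : EuclideanSpace ℝ (Fin N), g lam * w lam = f lam * w lam - ⟪ζ, lam⟫ * w lam := fun lam => by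
      simp only [hgdef]; ring
    calc (∫ lam in Δ, g lam * w lam)
        = ∫ lam in Δ, (f lam * w lam - ⟪ζ, lam⟫ * w lam) := by simp only [hexp]
      _ = (∫ lam in Δ, f lam * w lam) - ∫ lam in Δ, ⟪ζ, lam⟫ * w lam :=
          integral_sub hIfw (hI2 ζ)
      _ = (∫ lam in Δ, f lam * w lam) - Vw * ⟪ζ, b⟫ := by rw [hIb ζ]
  have hJζ : M - (1 / Vw) * (∫ lam in Δ, g lam * w lam) ≤ Dw + R * ‖p‖ := by
    rw [hIgw]
    have h7 : (1 / Vw) * ((∫ lam in Δ, f lam * w lam) - Vw * ⟪ζ, b⟫)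
        = (1 / Vw) * (∫ lam in Δ, f lam * w lam) - ⟪ζ, b⟫ := by
      rw [mul_sub, one_div, inv_mul_cancel_left₀ hVw0.ne']
    rw [h7]
    have h8 : ⟪ζ, b⟫ - ⟪ζ, κ⟫ = 0 := by
      rw [← inner_sub_right]; exact hζperp
    rw [hDw]
    linarith [hMle]
  -- every element of the J-set is nonnegative
  have hlb0 : ∀ ζ' : EuclideanSpace ℝ (Fin N), (0:ℝ) ≤
      sSup ((fun lam => f lam - ⟪ζ', lam⟫) '' Δ) -
        (1 / Vw) * ∫ lam in Δ, (f lam - ⟪ζ', lam⟫) * w lam := by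
    intro ζ'
    have hg'c : Continuous (fun lam : EuclideanSpace ℝ (Fin N) => f lam - ⟪ζ', lam⟫) :=
      hfc.sub ((continuous_const).inner continuous_id)
    have hbdd : BddAbove ((fun lam : EuclideanSpace ℝ (Fin N) => f lam - ⟪ζ', lam⟫) '' Δ) :=
      (hΔcomp.image hg'c).bddAbove
    have hsup : ∀ lam ∈ Δ, f lam - ⟪ζ', lam⟫ ≤
        sSup ((fun lam : EuclideanSpace ℝ (Fin N) => f lam - ⟪ζ', lam⟫) '' Δ) := fun lam hlam =>
      le_csSup hbdd (Set.mem_image_of_mem _ hlam)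
    have hIg'w : IntegrableOn (fun lam => (f lam - ⟪ζ', lam⟫) * w lam) Δ :=
      (hg'c.mul hw).continuousOn.integrableOn_compact hΔcomp
    have hIcw : IntegrableOn (fun lam =>
        sSup ((fun lam : EuclideanSpace ℝ (Fin N) => f lam - ⟪ζ', lam⟫) '' Δ) * w lam) Δ :=
      hIw.const_mul _
    have hle : (∫ lam in Δ, (f lam - ⟪ζ', lam⟫) * w lam) ≤
        sSup ((fun lam : EuclideanSpace ℝ (Fin N) => f lam - ⟪ζ', lam⟫) '' Δ) * Vw := by
      calc (∫ lam in Δ, (f lam - ⟪ζ', lam⟫) * w lam)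
          ≤ ∫ lam in Δ,
              sSup ((fun lam : EuclideanSpace ℝ (Fin N) => f lam - ⟪ζ', lam⟫) '' Δ) * w lam :=
            setIntegral_mono_on hIg'w hIcw hmeas
              (fun lam hlam => mul_le_mul_of_nonneg_right (hsup lam hlam) (hwpos lam hlam).le)
        _ = sSup ((fun lam : EuclideanSpace ℝ (Fin N) => f lam - ⟪ζ', lam⟫) '' Δ) * Vw := by
            rw [integral_const_mul, ← hVw]
    have h9 : (1 / Vw) * (∫ lam in Δ, (f lam - ⟪ζ', lam⟫) * w lam) ≤
        sSup ((fun lam : EuclideanSpace ℝ (Fin N) => f lam - ⟪ζ', lam⟫) '' Δ) := by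
      calc (1 / Vw) * (∫ lam in Δ, (f lam - ⟪ζ', lam⟫) * w lam)
          ≤ (1 / Vw) *
              (sSup ((fun lam : EuclideanSpace ℝ (Fin N) => f lam - ⟪ζ', lam⟫) '' Δ) * Vw) :=
            mul_le_mul_of_nonneg_left hle (by positivity)
        _ = sSup ((fun lam : EuclideanSpace ℝ (Fin N) => f lam - ⟪ζ', lam⟫) '' Δ) := by
            rw [one_div, mul_comm _ Vw, inv_mul_cancel_left₀ hVw0.ne']
    linarith
  set S : Set ℝ := (fun ζ' =>
      sSup ((fun lam => f lam - ⟪ζ', lam⟫) '' Δ) -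
        (1 / Vw) * ∫ lam in Δ, (f lam - ⟪ζ', lam⟫) * w lam) '' (V ∩ -V) with hS
  have hlb : ∀ x ∈ S, (0:ℝ) ≤ x := by
    rintro x ⟨ζ', hζ', rfl⟩
    exact hlb0 ζ'
  have hsInf : sInf S ≤ M - (1 / Vw) * (∫ lam in Δ, g lam * w lam) := by
    exact csInf_le ⟨0, hlb⟩ (Set.mem_image_of_mem _ hζmem)
  -- conclusion
  have hfinal : (ε / (ε + R)) * (Dw + R * ‖p‖) ≤ Dw := by
    rw [div_mul_eq_mul_div, div_le_iff₀ hεR]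
    nlinarith [mul_le_mul_of_nonneg_left hD hR0, norm_nonneg p]
  calc (ε / (ε + R)) * sInf S
      ≤ (ε / (ε + R)) * (M - (1 / Vw) * (∫ lam in Δ, g lam * w lam)) :=
        mul_le_mul_of_nonneg_left hsInf (by positivity)
    _ ≤ (ε / (ε + R)) * (Dw + R * ‖p‖) :=
        mul_le_mul_of_nonneg_left hJζ (by positivity)
    _ ≤ Dw := hfinal
end

section
/- Let N ≥ 1, let Δ₊ ⊆ ℝ^N be a compact convex set with nonempty interior, let κ_P be an interior point of Δ₊, and let w : ℝ^N → ℝ be continuous with w(λ) > 0 for all λ ∈ Δ₊. Set V_w := ∫_{Δ₊} w dλ and b_w := (1/V_w) ∫_{Δ₊} λ w(λ) dλ. Let V ⊆ ℝ^N be a closed convex cone with nonempty interior and lineality space V_z := V ∩ (−V). Then the following are equivalent: (i) b_w − κ_P lies in the relative interior of (−V)^∨ := {y ∈ ℝ^N : ⟨ξ, y⟩ ≤ 0 for all ξ ∈ V}; (ii) for every function f : Δ₊ → ℝ of the form f(λ) = min_{1≤a≤m}(C_a + ⟨Λ_a, λ⟩) with all slopes Λ_a ∈ V, one has M_w(f)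 := −(1/V_w)∫_{Δ₊} ⟨∇f(λ), λ − κ_P⟩ w(λ) dλ ≥ 0, and M_w(f) = 0 holds if and only if f is affine on Δ₊ with slope belonging to V_z. -/
open MeasureTheory Set
open scoped RealInnerProductSpace


section Geometry
variable {H : Type*} [NormedAddCommGroup H] [InnerProductSpace ℝ H] [FiniteDimensional ℝ H]

theorem relint_polar_iff (V : Set H) (hVclosed : IsClosed V) (hVconv : Convex ℝ V)
    (hVcone : ∀ c : ℝ, 0 ≤ c → ∀ x ∈ V, c • x ∈ V) (hV0 : (0 : H) ∈ V) (y : H) :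
    y ∈ intrinsicInterior ℝ {z : H | ∀ ξ ∈ V, ⟪ξ, z⟫ ≤ 0} ↔
      ((∀ ξ ∈ V, ⟪ξ, y⟫ ≤ 0) ∧ ∀ ξ ∈ V, ⟪ξ, y⟫ = 0 → -ξ ∈ V) := by
  set D : Set H := {z : H | ∀ ξ ∈ V, ⟪ξ, z⟫ ≤ 0} with hD
  have hadd : ∀ x ∈ V, ∀ z ∈ V, x + z ∈ V := by
    intro x hx z hz
    have h2 : (1/2 : ℝ) • x + (1/2 : ℝ) • z ∈ V :=
      hVconv hx hz (by norm_num) (by norm_num) (by norm_num)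
    have := hVcone 2 (by norm_num) _ h2
    rw [smul_add, smul_smul, smul_smul] at this
    norm_num at this
    exact this
  let L : Submodule ℝ H :=
  { carrier := V ∩ -V
    add_mem' := by
      rintro a b ⟨haV, haN⟩ ⟨hbV, hbN⟩
      rw [Set.mem_neg] at haN hbN
      exact ⟨hadd _ haV _ hbV, by rw [Set.mem_neg, neg_add]; exact hadd _ haN _ hbN⟩
    zero_mem' := ⟨hV0, by rw [Set.mem_neg, neg_zero]; exact hV0⟩
    smul_mem' := by
      intro c x ⟨hxV, hxN⟩
      rw [Set.mem_neg] at hxN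
      rcases le_total 0 c with hc | hc
      · exact ⟨hVcone c hc _ hxV, by
          rw [Set.mem_neg, ← smul_neg]; exact hVcone c hc _ hxN⟩
      · refine ⟨?_, ?_⟩
        · have : c • x = (-c) • (-x) := by rw [neg_smul, smul_neg, neg_neg]
          rw [this]; exact hVcone (-c) (by linarith) _ hxN
        · rw [Set.mem_neg, ← smul_neg]
          have : c • (-x) = (-c) • x := by rw [neg_smul, smul_neg]
          rw [this]; exact hVcone (-c) (by linarith) _ hxV }
  have hDLperp : D ⊆ (Lᗮ : Set H) := by
    intro z hz
    rw [SetLike.mem_coe, Submodule.mem_orthogonal]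
    rintro u ⟨huV, huN⟩
    rw [Set.mem_neg] at huN
    have h1 := hz u huV
    have h2 := hz (-u) huN
    rw [inner_neg_left] at h2
    linarith
  constructor
  · intro hy
    have hyD : y ∈ D := intrinsicInterior_subset hy
    refine ⟨hyD, ?_⟩
    intro ξ hξ hξy
    -- ⟪ξ, d⟫ = 0 for all d ∈ D
    have key : ∀ d ∈ D, ⟪ξ, d⟫ = 0 := by
      intro d hd
      obtain ⟨yy, hyyint, hyyval⟩ := mem_intrinsicInterior.1 hy
      have hS : ((↑) ⁻¹' D : Set (affineSpan ℝ D)) ∈ nhds yy := mem_interior_iff_mem_nhds.1 hyyint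
      rw [mem_nhds_subtype] at hS
      obtain ⟨u, hu, hud⟩ := hS
      rw [hyyval] at hu
      obtain ⟨ε, hε, hball⟩ := Metric.mem_nhds_iff.1 hu
      -- the point y + t (y - d)
      set t : ℝ := ε / (2 * (‖y - d‖ + 1)) with ht
      have htpos : 0 < t := by positivity
      set z : H := y + t • (y - d) with hzdef
      have hzA : z ∈ affineSpan ℝ D := by
        have : z = AffineMap.lineMap d y (1 + t) := by
          simp [AffineMap.lineMap_apply, hzdef]
          module
        rw [this]
        exact AffineMap.lineMap_mem _ (subset_affineSpan ℝ D hd) (subset_affineSpan ℝ D hyD)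
      have hzball : z ∈ Metric.ball y ε := by
        rw [Metric.mem_ball, dist_eq_norm]
        have : z - y = t • (y - d) := by rw [hzdef]; abel
        rw [this, norm_smul, Real.norm_eq_abs, abs_of_pos htpos, ht]
        have h1 : ‖y - d‖ < ‖y - d‖ + 1 := by linarith
        have h2 : 0 < ‖y - d‖ + 1 := by positivity
        calc ε / (2 * (‖y - d‖ + 1)) * ‖y - d‖
            ≤ ε / (2 * (‖y - d‖ + 1)) * (‖y - d‖ + 1) := by
              apply mul_le_mul_of_nonneg_left (by linarith) (by positivity)
          _ = ε / 2 := by field_simp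
          _ < ε := by linarith
      have hzD : z ∈ D := by
        have : (⟨z, hzA⟩ : affineSpan ℝ D) ∈ ((↑) ⁻¹' D : Set (affineSpan ℝ D)) :=
          hud (by rw [Set.mem_preimage]; exact hball hzball)
        exact this
      have hzle := hzD ξ hξ
      rw [hzdef, inner_add_right, inner_smul_right, inner_sub_right, hξy] at hzle
      have : -t * ⟪ξ, d⟫ ≤ 0 := by linarith
      have h0 : 0 ≤ ⟪ξ, d⟫ := by nlinarith
      exact le_antisymm (hd ξ hξ) h0
    -- bipolar
    have hξneg : -ξ ∈ V := by
      by_contra hnot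
      obtain ⟨f, u, hfV, hfu⟩ := geometric_hahn_banach_closed_point hVconv hVclosed hnot
      have hu0 : 0 < u := by have := hfV 0 hV0; rwa [map_zero] at this
      have hfle : ∀ a ∈ V, f a ≤ 0 := by
        intro a ha
        by_contra hpos
        push_neg at hpos
        have h1 := hfV _ (hVcone (2 * u / f a) (by positivity) a ha)
        rw [map_smul, smul_eq_mul, div_mul_cancel₀ _ hpos.ne'] at h1
        linarith
      set z : H := (InnerProductSpace.toDual ℝ H).symm f with hz
      have hzD : z ∈ D := by
        intro a ha
        rw [real_inner_comm, hz, InnerProductSpace.toDual_symm_apply]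
        exact hfle a ha
      have h2 : ⟪z, -ξ⟫ = f (-ξ) := by rw [hz, InnerProductSpace.toDual_symm_apply]
      have h3 := key z hzD
      rw [inner_neg_right, real_inner_comm ξ z, h3] at h2
      linarith
    exact hξneg
  · rintro ⟨hyD, hstrict⟩
    have hyLperp : y ∈ Lᗮ := hDLperp hyD
    -- uniform negativity on the compact slice
    set K' : Set H := V ∩ (Lᗮ : Set H) ∩ Metric.sphere 0 1 with hK'
    have hK'comp : IsCompact K' :=
      (isCompact_sphere (0 : H) 1).of_isClosed_subset
        ((hVclosed.inter (Submodule.closed_of_finiteDimensional Lᗮ)).inter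
          Metric.isClosed_sphere) inter_subset_right
    have hK'neg : ∀ ξ ∈ K', ⟪ξ, y⟫ < 0 := by
      rintro ξ ⟨⟨hξV, hξperp⟩, hξs⟩
      rcases lt_or_eq_of_le (hyD ξ hξV) with h | h
      · exact h
      · exfalso
        have hmem : ξ ∈ L := ⟨hξV, Set.mem_neg.mpr (hstrict ξ hξV h)⟩
        have hξp' : ξ ∈ Lᗮ := hξperp
        have h0 : ⟪ξ, ξ⟫ = 0 := (Submodule.mem_orthogonal' L ξ).1 hξp' ξ hmem
        rw [real_inner_self_eq_norm_sq] at h0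
        rw [mem_sphere_zero_iff_norm] at hξs
        rw [hξs] at h0; norm_num at h0
    obtain ⟨ε, hεpos, hεbd⟩ : ∃ ε > 0, ∀ ξ ∈ K', ⟪ξ, y⟫ ≤ -ε := by
      rcases K'.eq_empty_or_nonempty with h | h
      · exact ⟨1, one_pos, by rw [h]; simp⟩
      · obtain ⟨ξ₀, hξ₀, hmax⟩ := hK'comp.exists_isMaxOn h
          (Continuous.continuousOn (by continuity : Continuous fun ξ : H => ⟪ξ, y⟫))
        exact ⟨-⟪ξ₀, y⟫, by linarith [hK'neg ξ₀ hξ₀], fun ξ hξ => by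
          have := hmax hξ; simp only [neg_neg]; exact this⟩
    -- the ball inclusion
    have hball : ∀ z : H, z ∈ (Lᗮ : Set H) → ‖z - y‖ < ε → z ∈ D := by
      intro z hzperp hznear ξ hξV
      set ξl : H := (L.orthogonalProjectionOnto ξ : H) with hξl
      set ξp : H := ξ - ξl with hξp
      have hξlL : ξl ∈ L := (L.orthogonalProjectionOnto ξ).2
      have hξpperp : ξp ∈ Lᗮ := L.sub_starProjection_mem_orthogonal ξ
      have hξpV : ξp ∈ V := by
        have : -ξl ∈ V := hξlL.2
        have := hadd ξ hξV (-ξl) this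
        rwa [← sub_eq_add_neg] at this
      have hsplit : ⟪ξ, z⟫ = ⟪ξp, z⟫ := by
        have hz0 : ⟪ξl, z⟫ = 0 := by
          have hz' : z ∈ Lᗮ := hzperp
          exact (Submodule.mem_orthogonal L z).1 hz' ξl hξlL
        rw [hξp, inner_sub_left, hz0]; ring
      show ⟪ξ, z⟫ ≤ 0
      rw [hsplit]
      rcases eq_or_ne ξp 0 with h0 | h0
      · rw [h0, inner_zero_left]
      · have hnorm : 0 < ‖ξp‖ := norm_pos_iff.2 h0
        have hunit : (‖ξp‖⁻¹ • ξp) ∈ K' := by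
          refine ⟨⟨hVcone _ (by positivity) _ hξpV, Submodule.smul_mem _ _ hξpperp⟩, ?_⟩
          rw [mem_sphere_zero_iff_norm, norm_smul, Real.norm_eq_abs, abs_inv,
            abs_of_pos hnorm, inv_mul_cancel₀ hnorm.ne']
        have hy' : ⟪ξp, y⟫ ≤ -ε * ‖ξp‖ := by
          have := hεbd _ hunit
          rw [real_inner_smul_left] at this
          have h2 : ‖ξp‖⁻¹ * ⟪ξp, y⟫ ≤ -ε := this
          have h3 := mul_le_mul_of_nonneg_left h2 hnorm.le
          rw [← mul_assoc, mul_inv_cancel₀ hnorm.ne', one_mul] at h3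
          linarith
        have hCS : ⟪ξp, z - y⟫ ≤ ‖ξp‖ * ‖z - y‖ := real_inner_le_norm ξp (z - y)
        have : ⟪ξp, z⟫ = ⟪ξp, y⟫ + ⟪ξp, z - y⟫ := by
          rw [← inner_add_right]
          congr 1
          abel
        rw [this]
        nlinarith [norm_nonneg (z - y), hnorm]
    -- affine span of D is Lᗮ
    have h0D : (0 : H) ∈ D := by intro ξ _; rw [inner_zero_right]
    have hALperp : (affineSpan ℝ D : Set H) ⊆ (Lᗮ : Set H) := by
      have : affineSpan ℝ D ≤ Lᗮ.toAffineSubspace := affineSpan_le.2 hDLperp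
      exact fun x hx => this hx
    have hdir : ∀ v : H, v ∈ Lᗮ → v ∈ (affineSpan ℝ D).direction := by
      intro v hv
      rcases eq_or_ne v 0 with h | h
      · rw [h]; exact (affineSpan ℝ D).direction.zero_mem
      · have hvn : 0 < ‖v‖ := norm_pos_iff.2 h
        set t : ℝ := ε / (2 * ‖v‖) with ht
        have htpos : 0 < t := by positivity
        have hyt : y + t • v ∈ D := by
          apply hball _ (by
            exact Submodule.add_mem _ hyLperp (Submodule.smul_mem _ _ hv))
          have : y + t • v - y = t • v := by abel
          rw [this, norm_smul, Real.norm_eq_abs, abs_of_pos htpos, ht]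
          rw [div_mul_eq_mul_div, mul_comm]
          rw [div_lt_iff₀ (by positivity)]
          nlinarith
        have hsub : (y + t • v) -ᵥ y ∈ (affineSpan ℝ D).direction :=
          AffineSubspace.vsub_mem_direction (subset_affineSpan ℝ D hyt)
            (subset_affineSpan ℝ D hyD)
        have : t • v ∈ (affineSpan ℝ D).direction := by
          have he : (y + t • v) -ᵥ y = t • v := by simp [vsub_eq_sub]
          rwa [he] at hsub
        have := (affineSpan ℝ D).direction.smul_mem t⁻¹ this
        rwa [smul_smul, inv_mul_cancel₀ htpos.ne', one_smul] at this
    refine ⟨⟨y, subset_affineSpan ℝ D hyD⟩, ?_, rfl⟩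
    apply interior_maximal (t := ((↑) ⁻¹' (Metric.ball y ε) : Set (affineSpan ℝ D)))
    · rintro ⟨z, hzA⟩ hz
      rw [Set.mem_preimage] at hz ⊢
      have hzperp : z ∈ (Lᗮ : Set H) := hALperp hzA
      exact hball z hzperp (by rwa [Metric.mem_ball, dist_eq_norm] at hz)
    · exact Metric.isOpen_ball.preimage continuous_subtype_val
    · rw [Set.mem_preimage]; exact Metric.mem_ball_self hεpos
end Geometry


section Analysis
variable {N : ℕ}

theorem hasGradientAt_affine (C : ℝ) (Λ x : EuclideanSpace ℝ (Fin N)) :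
    HasGradientAt (fun z => C + ⟪Λ, z⟫) Λ x := by
  rw [hasGradientAt_iff_hasFDerivAt]
  have h := (InnerProductSpace.toDual ℝ (EuclideanSpace ℝ (Fin N)) Λ).hasFDerivAt (x := x)
  have h2 := (hasFDerivAt_const C x).add h
  exact h.const_add C

theorem gradient_congr' {f g : EuclideanSpace ℝ (Fin N) → ℝ} {x : EuclideanSpace ℝ (Fin N)}
    (h : f =ᶠ[nhds x] g) : gradient f x = gradient g x := by
  unfold gradient
  rw [h.fderiv_eq]

theorem hyperplane_null (v : EuclideanSpace ℝ (Fin N)) (hv : v ≠ 0) (c : ℝ) :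
    volume {x : EuclideanSpace ℝ (Fin N) | ⟪v, x⟫ = c} = 0 := by
  set S : Submodule ℝ (EuclideanSpace ℝ (Fin N)) := (Submodule.span ℝ {v})ᗮ with hSdef
  have hvn : (0:ℝ) < ‖v‖ := norm_pos_iff.2 hv
  have hS : volume (S : Set (EuclideanSpace ℝ (Fin N))) = 0 := by
    apply Measure.addHaar_submodule
    intro hTop
    have hvS : v ∈ S := hTop ▸ Submodule.mem_top
    have : ⟪v, v⟫ = 0 := Submodule.mem_orthogonal_singleton_iff_inner_right.1 hvS
    rw [real_inner_self_eq_norm_sq] at this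
    nlinarith
  set x₀ : EuclideanSpace ℝ (Fin N) := (c / ‖v‖^2) • v with hx₀
  have hkey : {x : EuclideanSpace ℝ (Fin N) | ⟪v, x⟫ = c}
      = (fun x => x + (-x₀)) ⁻¹' (S : Set (EuclideanSpace ℝ (Fin N))) := by
    ext x
    simp only [Set.mem_setOf_eq, Set.mem_preimage, SetLike.mem_coe, hSdef,
      Submodule.mem_orthogonal_singleton_iff_inner_right]
    rw [inner_add_right, inner_neg_right, hx₀, real_inner_smul_right,
      real_inner_self_eq_norm_sq]
    constructor
    · intro h; rw [h]; field_simp; ring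
    · intro h
      have : c / ‖v‖^2 * ‖v‖^2 = c := by field_simp
      linarith
  rw [hkey]
  rw [measure_preimage_add_right]
  exact hS

theorem ae_gradient_min (m : ℕ) (C : Fin (m+1) → ℝ) (Λ : Fin (m+1) → EuclideanSpace ℝ (Fin N))
    (f : EuclideanSpace ℝ (Fin N) → ℝ)
    (hf : ∀ lam, f lam = Finset.univ.inf' Finset.univ_nonempty (fun a => C a + ⟪Λ a, lam⟫)) :
    ∀ᵐ x : EuclideanSpace ℝ (Fin N), ∃ a, gradient f x = Λ a ∧ f x = C a + ⟪Λ a, x⟫ := by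
  have hZ : ∀ᵐ x : EuclideanSpace ℝ (Fin N), ∀ p : Fin (m+1) × Fin (m+1),
      ¬(C p.1 = C p.2 ∧ Λ p.1 = Λ p.2) → C p.1 + ⟪Λ p.1, x⟫ ≠ C p.2 + ⟪Λ p.2, x⟫ := by
    rw [ae_all_iff]
    intro p
    by_cases hp : C p.1 = C p.2 ∧ Λ p.1 = Λ p.2
    · filter_upwards with x h; exact absurd hp h
    · rcases eq_or_ne (Λ p.1) (Λ p.2) with hΛ | hΛ
      · filter_upwards with x _ hcontra
        rw [hΛ] at hcontra
        have : C p.1 = C p.2 := by linarith [add_right_cancel hcontra]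
        exact hp ⟨this, hΛ⟩
      · have hnull : volume {x : EuclideanSpace ℝ (Fin N) |
            ⟪Λ p.1 - Λ p.2, x⟫ = C p.2 - C p.1} = 0 :=
          hyperplane_null _ (sub_ne_zero.2 hΛ) _
        rw [ae_iff]
        refine measure_mono_null ?_ hnull
        intro x hx
        simp only [Set.mem_setOf_eq, not_forall, not_ne_iff] at hx ⊢
        obtain ⟨_, heq⟩ := hx
        rw [inner_sub_left]
        linarith
  filter_upwards [hZ] with x hx
  obtain ⟨a, _, ha⟩ := Finset.exists_mem_eq_inf' (Finset.univ_nonempty)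
    (fun b => C b + ⟪Λ b, x⟫)
  refine ⟨a, ?_, by rw [hf x, ha]⟩
  set U : Set (EuclideanSpace ℝ (Fin N)) :=
    {z | ∀ b, ¬(C b = C a ∧ Λ b = Λ a) → C a + ⟪Λ a, z⟫ < C b + ⟪Λ b, z⟫} with hU
  have hcont : ∀ (b : Fin (m+1)), Continuous (fun z : EuclideanSpace ℝ (Fin N) => C b + ⟪Λ b, z⟫) :=
    fun b => continuous_const.add (continuous_const.inner continuous_id)
  have hUopen : IsOpen U := by
    have hUeq : U = ⋂ b : Fin (m+1),
        {z | ¬(C b = C a ∧ Λ b = Λ a) → C a + ⟪Λ a, z⟫ < C b + ⟪Λ b, z⟫} := by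
      ext z; simp [hU, Set.mem_iInter]
    rw [hUeq]
    apply isOpen_iInter_of_finite
    intro b
    by_cases hb : C b = C a ∧ Λ b = Λ a
    · convert isOpen_univ
      ext z; simp [hb]
    · have : {z : EuclideanSpace ℝ (Fin N) |
          ¬(C b = C a ∧ Λ b = Λ a) → C a + ⟪Λ a, z⟫ < C b + ⟪Λ b, z⟫}
          = {z | C a + ⟪Λ a, z⟫ < C b + ⟪Λ b, z⟫} := by
        ext z; simp [hb]
      rw [this]
      exact isOpen_lt (hcont a) (hcont b)
  have hxU : x ∈ U := by
    intro b hb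
    have hle : C a + ⟪Λ a, x⟫ ≤ C b + ⟪Λ b, x⟫ := by
      rw [← ha]
      exact Finset.inf'_le _ (Finset.mem_univ b)
    rcases lt_or_eq_of_le hle with h | h
    · exact h
    · exact absurd h (hx (a, b) (fun hc => hb ⟨hc.1.symm, hc.2.symm⟩))
  have hEqOn : Set.EqOn f (fun z => C a + ⟪Λ a, z⟫) U := by
    intro z hz
    rw [hf z]
    apply le_antisymm
    · exact Finset.inf'_le _ (Finset.mem_univ a)
    · apply Finset.le_inf'
      intro b _
      by_cases hb : C b = C a ∧ Λ b = Λ a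
      · rw [hb.1, hb.2]
      · exact le_of_lt (hz b hb)
  have heq : f =ᶠ[nhds x] (fun z => C a + ⟪Λ a, z⟫) :=
    Filter.eventuallyEq_of_mem (hUopen.mem_nhds hxU) hEqOn
  rw [gradient_congr' heq, (hasGradientAt_affine _ _ _).gradient]
end Analysis


theorem eqzero_of_setIntegral {N : ℕ} (Δ : Set (EuclideanSpace ℝ (Fin N)))
    (hΔcomp : IsCompact Δ) (hΔconv : Convex ℝ Δ) (hΔint : (interior Δ).Nonempty)
    (h : EuclideanSpace ℝ (Fin N) → ℝ) (hc : Continuous h) (hnn : ∀ x ∈ Δ, 0 ≤ h x)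
    (hzero : ∫ x in Δ, h x = 0) : ∀ x ∈ Δ, h x = 0 := by
  by_contra hcon
  push_neg at hcon
  obtain ⟨x, hxΔ, hxne⟩ := hcon
  have hxpos : 0 < h x := lt_of_le_of_ne (hnn x hxΔ) (Ne.symm hxne)
  obtain ⟨y, hy⟩ := hΔint
  -- find an interior point where h > h x / 2
  set W : Set (EuclideanSpace ℝ (Fin N)) := {z | h x / 2 < h z} with hW
  have hWopen : IsOpen W := isOpen_lt continuous_const hc
  have hxW : x ∈ W := by simp [hW]; linarith
  set φ : ℝ → EuclideanSpace ℝ (Fin N) := fun t => (1 - t) • x + t • y with hφ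
  have hφcont : Continuous φ := by continuity
  have hφ0 : φ 0 = x := by simp [hφ]
  have hmem : φ ⁻¹' W ∈ nhds (0 : ℝ) := by
    apply hφcont.continuousAt.preimage_mem_nhds
    rw [hφ0]
    exact hWopen.mem_nhds hxW
  obtain ⟨δ, hδpos, hδ⟩ := Metric.mem_nhds_iff.1 hmem
  set t : ℝ := min (δ / 2) 1 with ht
  have htpos : 0 < t := by positivity
  have htle : t ≤ 1 := min_le_right _ _
  have htW : φ t ∈ W := by
    apply hδ
    rw [Metric.mem_ball, Real.dist_eq, sub_zero, abs_of_pos htpos]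
    calc t ≤ δ / 2 := min_le_left _ _
      _ < δ := by linarith
  have htint : φ t ∈ interior Δ := by
    rw [hφ]
    exact hΔconv.combo_closure_interior_mem_interior (subset_closure hxΔ) hy
      (by linarith) htpos (by ring)
  -- the open set
  set U : Set (EuclideanSpace ℝ (Fin N)) := interior Δ ∩ W with hUdef
  have hUopen : IsOpen U := isOpen_interior.inter hWopen
  have hUne : U.Nonempty := ⟨φ t, htint, htW⟩
  have hUΔ : U ⊆ Δ := fun z hz => interior_subset hz.1
  have hΔmeas : MeasurableSet Δ := hΔcomp.isClosed.measurableSet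
  have hΔfin : volume Δ < ⊤ := hΔcomp.measure_lt_top
  have hUfin : volume U < ⊤ := lt_of_le_of_lt (measure_mono hUΔ) hΔfin
  have hUpos : 0 < volume U := hUopen.measure_pos volume hUne
  have hint : IntegrableOn h Δ := hc.continuousOn.integrableOn_compact hΔcomp
  have hintU : IntegrableOn h U := hint.mono_set hUΔ
  have h1 : h x / 2 * (volume U).toReal ≤ ∫ z in U, h z :=
    setIntegral_ge_of_const_le_real hUopen.measurableSet hUfin.ne
      (fun z hz => le_of_lt hz.2) hintU
  have h2 : ∫ z in U, h z ≤ ∫ z in Δ, h z := by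
    apply setIntegral_mono_set hint
    · filter_upwards [ae_restrict_mem hΔmeas] with z hz
      exact hnn z hz
    · exact HasSubset.Subset.eventuallyLE hUΔ
  have h3 : 0 < (volume U).toReal := ENNReal.toReal_pos hUpos.ne' hUfin.ne
  nlinarith


set_option maxHeartbeats 1000000 in
/-- combinatorial form of (1) ⟺ (4) in the paper's Theorem 1.3.
The barycenter condition `b_w - κ_P ∈ RelInt((-V)^∨)` holds if and only if for every
piecewise linear concave `f = min_a (C_a + ⟨Λ_a, ·⟩)` with slopes in the solid closed
convex cone `V`, the weighted non-Archimedean Mabuchi functional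
`M_w(f) = -(1/V_w) ∫_{Δ₊} ⟨∇f(λ), λ - κ_P⟩ w(λ) dλ` is nonnegative, and vanishes
exactly when `f` is affine on `Δ₊` with slope in the lineality space `V_z = V ∩ (-V)`. -/
theorem stmt4 (N : ℕ) (hN : 1 ≤ N)
    (Δ : Set (EuclideanSpace ℝ (Fin N)))
    (hΔcomp : IsCompact Δ) (hΔconv : Convex ℝ Δ) (hΔint : (interior Δ).Nonempty)
    (κ : EuclideanSpace ℝ (Fin N)) (hκ : κ ∈ interior Δ)
    (w : EuclideanSpace ℝ (Fin N) → ℝ) (hw : Continuous w)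
    (hwpos : ∀ lam ∈ Δ, 0 < w lam)
    (Vw : ℝ) (hVw : Vw = ∫ lam in Δ, w lam)
    (b : EuclideanSpace ℝ (Fin N))
    (hb : b = (1 / Vw) • ∫ lam in Δ, w lam • lam)
    (V : Set (EuclideanSpace ℝ (Fin N)))
    (hVclosed : IsClosed V) (hVconv : Convex ℝ V)
    (hVcone : ∀ c : ℝ, 0 ≤ c → ∀ x ∈ V, c • x ∈ V)
    (hVsolid : (interior V).Nonempty) :
    (b - κ ∈ intrinsicInterior ℝ
        {y : EuclideanSpace ℝ (Fin N) | ∀ ξ ∈ V, ⟪ξ, y⟫ ≤ 0}) ↔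
      (∀ (m : ℕ) (C : Fin (m + 1) → ℝ) (Λ : Fin (m + 1) → EuclideanSpace ℝ (Fin N)),
        (∀ a, Λ a ∈ V) →
        ∀ f : EuclideanSpace ℝ (Fin N) → ℝ,
        (∀ lam, f lam = Finset.univ.inf' Finset.univ_nonempty
          (fun a => C a + ⟪Λ a, lam⟫)) →
        0 ≤ -(1 / Vw) * ∫ lam in Δ, ⟪gradient f lam, lam - κ⟫ * w lam ∧
        ((-(1 / Vw) * ∫ lam in Δ, ⟪gradient f lam, lam - κ⟫ * w lam = 0) ↔
          ∃ c : ℝ, ∃ ζ ∈ V ∩ -V, ∀ lam ∈ Δ, f lam = c + ⟪ζ, lam⟫)) := by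
  classical
  have hV0 : (0 : EuclideanSpace ℝ (Fin N)) ∈ V := by
    obtain ⟨x, hx⟩ := hVsolid
    have := hVcone 0 le_rfl x (interior_subset hx)
    rwa [zero_smul] at this
  have hΔmeas : MeasurableSet Δ := hΔcomp.isClosed.measurableSet
  have hΔfin : volume Δ < ⊤ := hΔcomp.measure_lt_top
  have hΔpos : 0 < volume Δ :=
    lt_of_lt_of_le (isOpen_interior.measure_pos volume hΔint) (measure_mono interior_subset)
  have hwint : IntegrableOn w Δ := hw.continuousOn.integrableOn_compact hΔcomp
  have hVwpos : 0 < Vw := by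
    rw [hVw]
    obtain ⟨c, hcΔ, hc⟩ := hΔcomp.exists_isMinOn
      (hΔint.imp fun x hx => interior_subset hx) hw.continuousOn
    have h1 : w c * (volume Δ).toReal ≤ ∫ lam in Δ, w lam :=
      setIntegral_ge_of_const_le_real hΔmeas hΔfin.ne (fun x hx => hc hx) hwint
    have h2 : 0 < (volume Δ).toReal := ENNReal.toReal_pos hΔpos.ne' hΔfin.ne
    nlinarith [hwpos c hcΔ]
  have hVwne : Vw ≠ 0 := ne_of_gt hVwpos
  have hwlint : IntegrableOn (fun lam => w lam • lam) Δ :=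
    (hw.smul continuous_id).continuousOn.integrableOn_compact hΔcomp
  have hbint : ∫ lam in Δ, w lam • lam = Vw • b := by
    rw [hb, smul_smul, mul_one_div, div_self hVwne, one_smul]
  have haff : ∀ L : EuclideanSpace ℝ (Fin N),
      ∫ lam in Δ, ⟪L, lam - κ⟫ * w lam = Vw * ⟪L, b - κ⟫ := by
    intro L
    have e : ∀ lam : EuclideanSpace ℝ (Fin N),
        ⟪L, lam - κ⟫ * w lam = ⟪L, w lam • lam⟫ - ⟪L, κ⟫ * w lam := by
      intro lam
      rw [inner_sub_right, real_inner_smul_right]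
      ring
    simp_rw [e]
    rw [integral_sub (Integrable.const_inner L hwlint) (hwint.const_mul _),
      integral_inner hwlint L, hbint, integral_const_mul, inner_smul_right, ← hVw,
      inner_sub_right]
    ring
  have hintaff : ∀ L : EuclideanSpace ℝ (Fin N),
      IntegrableOn (fun lam => ⟪L, lam - κ⟫ * w lam) Δ := fun L =>
    (((continuous_const.inner (continuous_id.sub continuous_const)).mul
      hw)).continuousOn.integrableOn_compact hΔcomp
  have haffint : ∀ (cc : ℝ) (L : EuclideanSpace ℝ (Fin N)),
      ∫ lam in Δ, (cc + ⟪L, lam⟫) * w lam = (cc + ⟪L, b⟫) * Vw := by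
    intro cc L
    have e : ∀ lam : EuclideanSpace ℝ (Fin N),
        (cc + ⟪L, lam⟫) * w lam = ⟪L, lam - κ⟫ * w lam + (cc + ⟪L, κ⟫) * w lam := by
      intro lam; rw [inner_sub_right]; ring
    simp_rw [e]
    rw [integral_add (hintaff L) (hwint.const_mul _), haff L, integral_const_mul, ← hVw,
      inner_sub_right]
    ring
  have hgradaffine : ∀ (c : ℝ) (ζ : EuclideanSpace ℝ (Fin N))
      (f : EuclideanSpace ℝ (Fin N) → ℝ), (∀ lam ∈ Δ, f lam = c + ⟪ζ, lam⟫) →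
      ∫ lam in Δ, ⟪gradient f lam, lam - κ⟫ * w lam = Vw * ⟪ζ, b - κ⟫ := by
    intro c ζ f hfa
    have hintmem : ∀ᵐ lam ∂(volume.restrict Δ), lam ∈ interior Δ := by
      rw [ae_restrict_iff' hΔmeas, ae_iff]
      apply measure_mono_null _ (hΔconv.addHaar_frontier volume)
      intro z hz
      rw [Set.mem_setOf_eq] at hz
      push_neg at hz
      exact ⟨subset_closure hz.1, hz.2⟩
    have hae : ∀ᵐ lam ∂(volume.restrict Δ),
        ⟪gradient f lam, lam - κ⟫ * w lam = ⟪ζ, lam - κ⟫ * w lam := by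
      filter_upwards [hintmem] with lam hlam
      have heq : f =ᶠ[nhds lam] (fun z => c + ⟪ζ, z⟫) :=
        Filter.eventuallyEq_of_mem (isOpen_interior.mem_nhds hlam)
          (fun z hz => hfa z (interior_subset hz))
      rw [gradient_congr' heq, (hasGradientAt_affine _ _ _).gradient]
    rw [integral_congr_ae hae, haff ζ]
  rw [relint_polar_iff V hVclosed hVconv hVcone hV0 (b - κ)]
  constructor
  · rintro ⟨hle, hstrict⟩
    intro m C Λ hΛ f hf
    set I := ∫ lam in Δ, ⟪gradient f lam, lam - κ⟫ * w lam with hIdef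
    have hae := ae_gradient_min m C Λ f hf
    have hfcont : Continuous f := by
      have hfe : f = fun lam => Finset.univ.inf' Finset.univ_nonempty
          (fun a => C a + ⟪Λ a, lam⟫) := funext hf
      rw [hfe]
      exact Continuous.finset_inf'_apply Finset.univ_nonempty
        (fun i _ => continuous_const.add (continuous_const.inner continuous_id))
    have hfb : ∀ a, f b ≤ C a + ⟪Λ a, b⟫ := fun a => by
      rw [hf b]; exact Finset.inf'_le _ (Finset.mem_univ a)
    have hfle : ∀ (lam : EuclideanSpace ℝ (Fin N)) a, f lam ≤ C a + ⟪Λ a, lam⟫ :=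
      fun lam a => by rw [hf lam]; exact Finset.inf'_le _ (Finset.mem_univ a)
    -- measurability and integrability of the integrand
    have hgradm : Measurable (gradient f) := by
      have h1 : Measurable (fderiv ℝ f) := measurable_fderiv ℝ f
      have h2 : (gradient f) = fun x =>
          (InnerProductSpace.toDual ℝ (EuclideanSpace ℝ (Fin N))).symm (fderiv ℝ f x) := rfl
      rw [h2]
      exact ((InnerProductSpace.toDual ℝ
        (EuclideanSpace ℝ (Fin N))).symm.continuous.measurable).comp h1
    have hFmeas : AEStronglyMeasurable (fun lam => ⟪gradient f lam, lam - κ⟫ * w lam)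
        (volume.restrict Δ) :=
      ((hgradm.inner (measurable_id.sub measurable_const)).mul
        hw.measurable).aestronglyMeasurable
    set R : ℝ := Finset.univ.sup' Finset.univ_nonempty (fun a => ‖Λ a‖) with hRdef
    have hRbd : ∀ a, ‖Λ a‖ ≤ R := fun a =>
      Finset.le_sup' (fun a => ‖Λ a‖) (Finset.mem_univ a)
    have hR0 : 0 ≤ R := le_trans (norm_nonneg _) (hRbd 0)
    obtain ⟨M, hM⟩ := hΔcomp.exists_bound_of_continuousOn
      ((continuous_id.sub continuous_const).norm.mul hw.norm).continuousOn
    have hFint : IntegrableOn (fun lam => ⟪gradient f lam, lam - κ⟫ * w lam) Δ := by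
      apply Integrable.mono' (g := fun _ => R * M) (integrableOn_const hΔfin.ne) hFmeas
      filter_upwards [ae_restrict_of_ae hae, ae_restrict_mem hΔmeas] with lam ha hlam
      obtain ⟨a, hg, _⟩ := ha
      have h1 : ‖⟪gradient f lam, lam - κ⟫‖ ≤ R * ‖lam - κ‖ := by
        rw [hg]
        calc ‖⟪Λ a, lam - κ⟫‖ ≤ ‖Λ a‖ * ‖lam - κ‖ := norm_inner_le_norm _ _
          _ ≤ R * ‖lam - κ‖ := mul_le_mul_of_nonneg_right (hRbd a) (norm_nonneg _)
      have h2 : ‖lam - κ‖ * ‖w lam‖ ≤ M := by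
        have h2' := hM lam hlam
        simp only [Real.norm_eq_abs, abs_mul, abs_abs, abs_norm] at h2'
        calc ‖lam - κ‖ * ‖w lam‖ = ‖lam - κ‖ * |w lam| := by rw [Real.norm_eq_abs]
          _ ≤ M := by simpa [abs_mul] using h2'
      rw [norm_mul]
      calc ‖⟪gradient f lam, lam - κ⟫‖ * ‖w lam‖
          ≤ (R * ‖lam - κ‖) * ‖w lam‖ := mul_le_mul_of_nonneg_right h1 (norm_nonneg _)
        _ = R * (‖lam - κ‖ * ‖w lam‖) := by ring
        _ ≤ R * M := mul_le_mul_of_nonneg_left h2 hR0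
    -- pointwise a.e. bound
    have hptwise : ∀ᵐ lam ∂(volume.restrict Δ),
        ⟪gradient f lam, lam - κ⟫ * w lam ≤ (f lam - f b) * w lam := by
      filter_upwards [ae_restrict_of_ae hae, ae_restrict_mem hΔmeas] with lam ha hlam
      obtain ⟨a, hg, hfl⟩ := ha
      have h1 : ⟪Λ a, lam - κ⟫ ≤ f lam - f b := by
        have e1 : ⟪Λ a, lam - κ⟫ = (f lam - C a - ⟪Λ a, b⟫) + ⟪Λ a, b - κ⟫ := by
          rw [hfl, inner_sub_right, inner_sub_right]; ring
        rw [e1]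
        have h2 := hle (Λ a) (hΛ a)
        have h3 := hfb a
        linarith
      rw [hg]
      exact mul_le_mul_of_nonneg_right h1 (hwpos lam hlam).le
    have hfwint : IntegrableOn (fun lam => (f lam - f b) * w lam) Δ :=
      ((hfcont.sub continuous_const).mul hw).continuousOn.integrableOn_compact hΔcomp
    set J := ∫ lam in Δ, (f lam - f b) * w lam with hJdef
    have hIJ : I ≤ J := integral_mono_ae hFint hfwint hptwise
    obtain ⟨a₀, _, ha₀⟩ := Finset.exists_mem_eq_inf' (Finset.univ_nonempty
      (α := Fin (m+1))) (fun a => C a + ⟪Λ a, b⟫)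
    have hfb0 : f b = C a₀ + ⟪Λ a₀, b⟫ := by rw [hf b, ha₀]
    have hJle : J ≤ 0 := by
      have hint2 : IntegrableOn
          (fun lam : EuclideanSpace ℝ (Fin N) => ((C a₀ - f b) + ⟪Λ a₀, lam⟫) * w lam) Δ :=
        (((continuous_const.add (continuous_const.inner continuous_id)).mul
          hw)).continuousOn.integrableOn_compact hΔcomp
      have hmono : J ≤ ∫ lam in Δ, ((C a₀ - f b) + ⟪Λ a₀, lam⟫) * w lam := by
        rw [hJdef]
        apply setIntegral_mono_on hfwint hint2 hΔmeas
        intro lam hlam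
        have h1 := hfle lam a₀
        have hwn := (hwpos lam hlam).le
        nlinarith
      rw [haffint (C a₀ - f b) (Λ a₀)] at hmono
      have : (C a₀ - f b + ⟪Λ a₀, b⟫) * Vw = 0 := by rw [hfb0]; ring
      linarith [hmono, this.le, this.ge]
    have hInonneg : 0 ≤ -(1 / Vw) * I := by
      have hI0 : I ≤ 0 := le_trans hIJ hJle
      have h1 : (0:ℝ) ≤ 1 / Vw := by positivity
      calc (0:ℝ) ≤ (1 / Vw) * (-I) := mul_nonneg h1 (neg_nonneg.2 hI0)
        _ = -(1 / Vw) * I := by ring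
    refine ⟨hInonneg, ?_, ?_⟩
    · -- equality implies affine
      intro hI0
      have hIzero : I = 0 := by
        have hne : -(1 / Vw) ≠ 0 := by
          simp only [neg_ne_zero]
          positivity
        exact (mul_eq_zero.1 hI0).resolve_left hne
      have hJzero : J = 0 := le_antisymm hJle (hIzero ▸ hIJ)
      -- the nonneg continuous function with zero integral
      set h₀ : EuclideanSpace ℝ (Fin N) → ℝ :=
        fun lam => ((C a₀ + ⟪Λ a₀, lam⟫) - f lam) * w lam with hh₀
      have hh₀cont : Continuous h₀ :=
        ((continuous_const.add (continuous_const.inner continuous_id)).sub hfcont).mul hw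
      have hh₀nn : ∀ x ∈ Δ, 0 ≤ h₀ x := by
        intro x hx
        have := hfle x a₀
        have := (hwpos x hx).le
        apply mul_nonneg <;> linarith
      have hh₀zero : ∫ x in Δ, h₀ x = 0 := by
        have e : ∀ lam : EuclideanSpace ℝ (Fin N),
            h₀ lam = ((C a₀ - f b) + ⟪Λ a₀, lam⟫) * w lam - (f lam - f b) * w lam := by
          intro lam; rw [hh₀]; ring
        simp_rw [e]
        have hint3 : IntegrableOn
            (fun lam : EuclideanSpace ℝ (Fin N) => ((C a₀ - f b) + ⟪Λ a₀, lam⟫) * w lam) Δ :=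
          (((continuous_const.add (continuous_const.inner continuous_id)).mul
            hw)).continuousOn.integrableOn_compact hΔcomp
        rw [integral_sub hint3 hfwint,
          haffint (C a₀ - f b) (Λ a₀), ← hJdef, hJzero, hfb0]
        ring
      have haffΔ : ∀ lam ∈ Δ, f lam = C a₀ + ⟪Λ a₀, lam⟫ := by
        intro lam hlam
        have := eqzero_of_setIntegral Δ hΔcomp hΔconv hΔint h₀ hh₀cont hh₀nn hh₀zero lam hlam
        have hwp := hwpos lam hlam
        rw [hh₀] at this
        have h2 : (C a₀ + ⟪Λ a₀, lam⟫) - f lam = 0 := by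
          rcases mul_eq_zero.1 this with h | h
          · exact h
          · exact absurd h hwp.ne'
        linarith
      have hIζ : I = Vw * ⟪Λ a₀, b - κ⟫ := hgradaffine (C a₀) (Λ a₀) f haffΔ
      have hζ0 : ⟪Λ a₀, b - κ⟫ = 0 := by
        rw [hIζ] at hIzero
        rcases mul_eq_zero.1 hIzero with h | h
        · exact absurd h hVwne
        · exact h
      exact ⟨C a₀, Λ a₀, ⟨hΛ a₀, Set.mem_neg.mpr (hstrict (Λ a₀) (hΛ a₀) hζ0)⟩, haffΔ⟩
    · -- affine implies equality
      rintro ⟨c, ζ, ⟨hζV, hζN⟩, hfa⟩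
      have hIζ : I = Vw * ⟪ζ, b - κ⟫ := hgradaffine c ζ f hfa
      have hζ0 : ⟪ζ, b - κ⟫ = 0 := by
        have h1 := hle ζ hζV
        have h2 := hle (-ζ) (Set.mem_neg.mp hζN)
        rw [inner_neg_left] at h2
        linarith
      rw [hIζ, hζ0]
      ring
  · intro hRHS
    have hkey : ∀ ξ ∈ V, (⟪ξ, b - κ⟫ ≤ 0) ∧ (⟪ξ, b - κ⟫ = 0 → -ξ ∈ V) := by
      intro ξ hξ
      have h := hRHS 0 (fun _ => 0) (fun _ => ξ) (fun _ => hξ)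
        (fun lam => 0 + ⟪ξ, lam⟫) (fun lam => by simp)
      have hI : ∫ lam in Δ,
          ⟪gradient (fun z : EuclideanSpace ℝ (Fin N) => 0 + ⟪ξ, z⟫) lam, lam - κ⟫ * w lam
          = Vw * ⟪ξ, b - κ⟫ :=
        hgradaffine 0 ξ _ (fun lam _ => rfl)
      rw [hI] at h
      have hcomp : -(1 / Vw) * (Vw * ⟪ξ, b - κ⟫) = -⟪ξ, b - κ⟫ := by
        have h1 : (1 / Vw) * Vw = 1 := one_div_mul_cancel hVwne
        linear_combination (-⟪ξ, b - κ⟫) * h1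
      constructor
      · have h1 := h.1
        rw [hcomp] at h1
        linarith
      · intro h0
        have hzero : -(1 / Vw) * (Vw * ⟪ξ, b - κ⟫) = 0 := by rw [h0]; ring
        obtain ⟨c, ζ, hζmem, hfa⟩ := h.2.1 hzero
        -- derive ξ = ζ from affine equality on Δ
        obtain ⟨x₀, hx₀⟩ := hΔint
        obtain ⟨ε, hεpos, hball⟩ := Metric.mem_nhds_iff.1 (mem_interior_iff_mem_nhds.1 hx₀)
        have hxieq : ξ = ζ := by
          by_contra hne
          set u : EuclideanSpace ℝ (Fin N) := ξ - ζ with hu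
          have hun : 0 < ‖u‖ := by rw [hu, norm_pos_iff]; exact sub_ne_zero.2 hne
          set t : ℝ := ε / (2 * ‖u‖) with htdef
          have htpos : 0 < t := by positivity
          have hpΔ : x₀ + t • u ∈ Δ := by
            apply hball
            rw [Metric.mem_ball, dist_eq_norm]
            have he : x₀ + t • u - x₀ = t • u := by abel
            rw [he, norm_smul, Real.norm_eq_abs, abs_of_pos htpos, htdef]
            rw [div_mul_eq_mul_div, mul_comm, div_lt_iff₀ (by positivity)]
            nlinarith
          have e1 : 0 + ⟪ξ, x₀ + t • u⟫ = c + ⟪ζ, x₀ + t • u⟫ := hfa _ hpΔ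
          have e2 : 0 + ⟪ξ, x₀⟫ = c + ⟪ζ, x₀⟫ := hfa x₀ (hball (Metric.mem_ball_self hεpos))
          rw [inner_add_right, inner_add_right, real_inner_smul_right,
            real_inner_smul_right] at e1
          have l3 : t * ⟪ξ, u⟫ = t * ⟪ζ, u⟫ := by linarith
          have l4 : ⟪ξ, u⟫ = ⟪ζ, u⟫ := mul_left_cancel₀ htpos.ne' l3
          have l5 : ⟪u, u⟫ = 0 := by
            rw [hu, inner_sub_left]
            rw [hu] at l4
            linarith
          rw [real_inner_self_eq_norm_sq] at l5
          nlinarith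
        rw [hxieq]
        exact Set.mem_neg.mp hζmem.2
    exact ⟨fun ξ hξ => (hkey ξ hξ).1, fun ξ hξ h0 => (hkey ξ hξ).2 h0⟩
end

section
/- Let N ≥ 1, let Δ₊ ⊆ ℝ^N be a compact convex set with nonempty interior, let κ_P be an interior point of Δ₊, and let w : ℝ^N → ℝ be continuous with w(λ) > 0 for all λ ∈ Δ₊. Set V_w := ∫_{Δ₊} w dλ and b_w := (1/V_w) ∫_{Δ₊} λ w(λ) dλ. Let V ⊆ ℝ^N be a closed convex cone with lineality space V_z := V ∩ (−V), pr_z the orthogonal projection onto V_z, and assume b_w − κ_P lies in the relative interior of (−V)^∨ := {y : ⟨ξ, y⟩ ≤ 0 for all ξ ∈ V}. Let f : Δ₊ → ℝ be concave and Lebesgue-integrable, admitting a supergradient v at κ_P with v ∈ V and pr_z(v) = 0, and with sup_{Δ₊} f = 0. If f(κ_P) − (1/V_w)∫_{Δ₊} f w dλ = 0, then f vanishes identically on the interior of Δ₊. -/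
open MeasureTheory
open scoped RealInnerProductSpace

lemma aux_relint_s6 {n : Type*} [Fintype n] (C : Set (EuclideanSpace ℝ n)) (y c : EuclideanSpace ℝ n)
    (hy : y ∈ intrinsicInterior ℝ C) (hc : c ∈ C) :
    ∃ ε : ℝ, 0 < ε ∧ (1 + ε) • y - ε • c ∈ C := by
  rw [intrinsicInterior] at hy
  obtain ⟨y', hy', hyy⟩ := hy
  have hyC : y ∈ C := by
    have := interior_subset hy'
    simpa [hyy] using this
  have hcs : c ∈ affineSpan ℝ C := subset_affineSpan ℝ C hc
  have hys : ∀ t : ℝ, t • (y - c) + y ∈ affineSpan ℝ C := by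
    intro t
    have := AffineSubspace.smul_vsub_vadd_mem (affineSpan ℝ C) t
      (subset_affineSpan ℝ C hyC) hcs (subset_affineSpan ℝ C hyC)
    simpa [vsub_eq_sub, vadd_eq_add] using this
  set γ : ℝ → affineSpan ℝ C := fun t => ⟨t • (y - c) + y, hys t⟩ with hγ
  have hγc : Continuous γ := by
    apply Continuous.subtype_mk
    continuity
  have h0 : γ 0 = y' := by
    apply Subtype.ext
    simp [hγ, ← hyy]
  have : γ ⁻¹' (interior ((Subtype.val) ⁻¹' C)) ∈ nhds (0:ℝ) := by
    apply hγc.continuousAt.preimage_mem_nhds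
    exact (isOpen_interior).mem_nhds (by rw [h0]; exact hy')
  obtain ⟨ε, hε, hball⟩ := Metric.mem_nhds_iff.1 this
  refine ⟨ε/2, by positivity, ?_⟩
  have : γ (ε/2) ∈ interior ((Subtype.val) ⁻¹' C) := hball (by
    simp only [Metric.mem_ball, dist_zero_right, Real.norm_eq_abs]
    rw [abs_of_pos (by positivity)]; linarith)
  have := interior_subset this
  simp only [Set.mem_preimage, hγ] at this
  convert this using 1
  module

/-- rigidity in the proof of the paper's Lemma 6.1. Under the
barycenter condition `b_w - κ_P ∈ RelInt((-V)^∨)`, a concave integrable `f` on `Δ₊`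
with `sup_{Δ₊} f = 0`, admitting a supergradient `v ∈ V` at `κ_P` orthogonal to the
lineality space `V_z = V ∩ (-V)`, on which the Ding functional vanishes
(`f(κ_P) - (1/V_w) ∫ f w dλ = 0`), must vanish identically on the interior of `Δ₊`. -/
theorem stmt6 (N : ℕ) (hN : 1 ≤ N)
    (Δ : Set (EuclideanSpace ℝ (Fin N)))
    (hΔcomp : IsCompact Δ) (hΔconv : Convex ℝ Δ) (hΔint : (interior Δ).Nonempty)
    (κ : EuclideanSpace ℝ (Fin N)) (hκ : κ ∈ interior Δ)
    (w : EuclideanSpace ℝ (Fin N) → ℝ) (hw : Continuous w)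
    (hwpos : ∀ lam ∈ Δ, 0 < w lam)
    (Vw : ℝ) (hVw : Vw = ∫ lam in Δ, w lam)
    (b : EuclideanSpace ℝ (Fin N))
    (hb : b = (1 / Vw) • ∫ lam in Δ, w lam • lam)
    (V : Set (EuclideanSpace ℝ (Fin N)))
    (hVclosed : IsClosed V) (hVconv : Convex ℝ V)
    (hVcone : ∀ c : ℝ, 0 ≤ c → ∀ x ∈ V, c • x ∈ V)
    (hbary : b - κ ∈ intrinsicInterior ℝ
      {y : EuclideanSpace ℝ (Fin N) | ∀ ξ ∈ V, ⟪ξ, y⟫ ≤ 0})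
    (f : EuclideanSpace ℝ (Fin N) → ℝ)
    (hfconc : ConcaveOn ℝ Δ f) (hfint : IntegrableOn f Δ)
    (v : EuclideanSpace ℝ (Fin N)) (hv : v ∈ V)
    (hvperp : v ∈ (Submodule.span ℝ (V ∩ -V))ᗮ)
    (hsg : ∀ lam ∈ Δ, f lam ≤ f κ + ⟪v, lam - κ⟫)
    (hsup : sSup (f '' Δ) = 0)
    (hD0 : f κ - (1 / Vw) * ∫ lam in Δ, f lam * w lam = 0) :
    ∀ lam ∈ interior Δ, f lam = 0 := by
  classical
  set C : Set (EuclideanSpace ℝ (Fin N)) :=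
    {y : EuclideanSpace ℝ (Fin N) | ∀ ξ ∈ V, ⟪ξ, y⟫ ≤ 0} with hC
  have hκΔ : κ ∈ Δ := interior_subset hκ
  have hΔmeas : MeasurableSet Δ := hΔcomp.isClosed.measurableSet
  have hμΔpos : 0 < volume Δ := by
    obtain ⟨x, hx⟩ := hΔint
    calc (0:ENNReal) < volume (interior Δ) :=
          isOpen_interior.measure_pos volume ⟨x, hx⟩
      _ ≤ volume Δ := measure_mono interior_subset
  have hwint : IntegrableOn w Δ := hw.continuousOn.integrableOn_compact hΔcomp
  have hVwpos : 0 < Vw := by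
    rw [hVw]
    rw [setIntegral_pos_iff_support_of_nonneg_ae
      (ae_restrict_of_forall_mem hΔmeas (fun x hx => (hwpos x hx).le)) hwint]
    refine lt_of_lt_of_le hμΔpos (measure_mono ?_)
    intro x hx
    exact ⟨Function.mem_support.2 (hwpos x hx).ne', hx⟩
  have hVwne : Vw ≠ 0 := hVwpos.ne'
  have hIfw : (∫ lam in Δ, f lam * w lam) = Vw * f κ := by
    have h := sub_eq_zero.1 hD0
    field_simp at h
    linarith [h]
  obtain ⟨M, hM⟩ : ∃ M, ∀ x ∈ Δ, ‖w x‖ ≤ M :=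
    hΔcomp.exists_bound_of_continuousOn hw.continuousOn
  have hfw_int : IntegrableOn (fun x => f x * w x) Δ := by
    have := Integrable.bdd_mul (c := M) hfint (hw.aestronglyMeasurable.restrict)
      (ae_restrict_of_forall_mem hΔmeas hM)
    simpa [mul_comm, IntegrableOn] using this
  -- Step A
  have hbκC : b - κ ∈ C := intrinsicInterior_subset hbary
  have hA : ⟪v, b - κ⟫ = 0 := by
    have hle : ⟪v, b - κ⟫ ≤ 0 := hbκC v hv
    have hg_cont : Continuous (fun x : EuclideanSpace ℝ (Fin N) =>
        (f κ + ⟪v, x - κ⟫) * w x) := by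
      apply Continuous.mul _ hw
      exact continuous_const.add (continuous_const.inner (continuous_id.sub continuous_const))
    have hg_int : IntegrableOn (fun x => (f κ + ⟪v, x - κ⟫) * w x) Δ :=
      hg_cont.continuousOn.integrableOn_compact hΔcomp
    have hmono : (∫ x in Δ, f x * w x) ≤ ∫ x in Δ, (f κ + ⟪v, x - κ⟫) * w x := by
      apply setIntegral_mono_on hfw_int hg_int hΔmeas
      intro x hx
      exact mul_le_mul_of_nonneg_right (hsg x hx) (hwpos x hx).le
    have hsmul_int : IntegrableOn (fun x => w x • (x - κ)) Δ :=
      (hw.smul (continuous_id.sub continuous_const)).continuousOn.integrableOn_compact hΔcomp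
    have hsmulx_int : IntegrableOn (fun x : EuclideanSpace ℝ (Fin N) => w x • x) Δ :=
      (hw.smul continuous_id).continuousOn.integrableOn_compact hΔcomp
    have hIvec : (∫ x in Δ, w x • (x - κ)) = Vw • (b - κ) := by
      have h1 : (∫ x in Δ, w x • (x - κ))
          = (∫ x in Δ, w x • x) - (∫ x in Δ, w x) • κ := by
        simp_rw [smul_sub]
        rw [integral_sub hsmulx_int (hwint.smul_const κ), integral_smul_const]
      have h2 : (∫ x in Δ, w x • x) = Vw • b := by
        rw [hb, smul_smul, mul_one_div, div_self hVwne, one_smul]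
      rw [h1, h2, ← hVw, smul_sub]
    have hsplit : (∫ x in Δ, (f κ + ⟪v, x - κ⟫) * w x)
        = f κ * Vw + Vw * ⟪v, b - κ⟫ := by
      have h1 : ∀ x : EuclideanSpace ℝ (Fin N),
          (f κ + ⟪v, x - κ⟫) * w x = f κ * w x + ⟪v, w x • (x - κ)⟫ := by
        intro x
        rw [real_inner_smul_right]
        ring
      simp_rw [h1]
      rw [integral_add (hwint.const_mul _) (hsmul_int.const_inner v),
        integral_inner hsmul_int v, integral_const_mul, ← hVw, hIvec,
        real_inner_smul_right]
    rw [hIfw, hsplit] at hmono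
    have h0 : 0 ≤ Vw * ⟪v, b - κ⟫ := by linarith
    have := (mul_nonneg_iff_of_pos_left hVwpos).1 h0
    linarith
  -- Step B : v = 0
  have hvC0 : ∀ c ∈ C, 0 ≤ ⟪v, c⟫ := by
    intro c hc
    obtain ⟨ε, hε, hmem⟩ := aux_relint_s6 C (b - κ) c hbary hc
    have h := hmem v hv
    rw [inner_sub_right, real_inner_smul_right, real_inner_smul_right, hA] at h
    nlinarith
  have hKne : (V : Set (EuclideanSpace ℝ (Fin N))).Nonempty := ⟨v, hv⟩
  let K : ConvexCone ℝ (EuclideanSpace ℝ (Fin N)) :=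
    { carrier := V
      smul_mem' := fun c hc x hx => hVcone c hc.le x hx
      add_mem' := fun x hx y hy => by
        have h2 : (1/2:ℝ) • x + (1/2:ℝ) • y ∈ V :=
          hVconv hx hy (by norm_num) (by norm_num) (by norm_num)
        have h3 := hVcone 2 (by norm_num) _ h2
        have h4 : (2:ℝ) • ((1/2:ℝ) • x + (1/2:ℝ) • y) = x + y := by module
        rwa [h4] at h3 }
  have hnegv : -v ∈ V := by
    by_contra hn
    obtain ⟨y, hy1, hy2⟩ :=
      ProperCone.hyperplane_separation' (E := EuclideanSpace ℝ (Fin N))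
        ({ carrier := V
           add_mem' := fun hx hy => K.add_mem' hx hy
           zero_mem' := by simpa using hVcone 0 le_rfl v hv
           smul_mem' := fun c x hx => by simpa [NNReal.smul_def] using hVcone c c.2 x hx
           isClosed' := hVclosed } : ProperCone ℝ (EuclideanSpace ℝ (Fin N))) hn
    have hyC : -y ∈ C := fun ξ hξ => by
      rw [inner_neg_right]; linarith [hy1 ξ hξ]
    have h5 := hvC0 (-y) hyC
    rw [inner_neg_right] at h5
    rw [inner_neg_left, real_inner_comm] at hy2
    rw [real_inner_comm] at h5
    linarith
  have hv0 : v = 0 := by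
    have hmem : v ∈ Submodule.span ℝ (V ∩ -V) :=
      Submodule.subset_span ⟨hv, Set.mem_neg.2 hnegv⟩
    exact inner_self_eq_zero.1 (hvperp v hmem)
  -- Step C : f κ = 0 and f ≤ 0 on Δ
  have hbdd : ∀ x ∈ Δ, f x ≤ f κ := by
    intro x hx
    have h := hsg x hx
    rw [hv0] at h
    simpa using h
  have hfκ0 : f κ = 0 := by
    have h1 : sSup (f '' Δ) ≤ f κ :=
      csSup_le (Set.Nonempty.image f ⟨κ, hκΔ⟩) (by rintro z ⟨x, hx, rfl⟩; exact hbdd x hx)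
    have h2 : f κ ≤ sSup (f '' Δ) :=
      le_csSup ⟨f κ, by rintro z ⟨x, hx, rfl⟩; exact hbdd x hx⟩ ⟨κ, hκΔ, rfl⟩
    rw [hsup] at h1 h2
    linarith
  have hfle : ∀ x ∈ Δ, f x ≤ 0 := fun x hx => hfκ0 ▸ hbdd x hx
  -- Step D : f = 0 a.e. on Δ
  have haez : ∀ᵐ x ∂(volume.restrict Δ), f x = 0 := by
    have hnn : 0 ≤ᵐ[volume.restrict Δ] fun x => -(f x * w x) :=
      ae_restrict_of_forall_mem hΔmeas (fun x hx => by simp only [Pi.zero_apply]; nlinarith [hfle x hx, hwpos x hx])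
    have hinteg : Integrable (fun x => -(f x * w x)) (volume.restrict Δ) := hfw_int.neg
    have hz := (integral_eq_zero_iff_of_nonneg_ae hnn hinteg).1
      (by rw [integral_neg]; rw [hIfw, hfκ0, mul_zero, neg_zero])
    filter_upwards [hz, ae_restrict_mem hΔmeas] with x hx hxΔ
    have hwne := (hwpos x hxΔ).ne'
    have hmul : f x * w x = 0 := by
      have : -(f x * w x) = 0 := hx
      linarith
    exact (mul_eq_zero.1 hmul).resolve_right hwne
  have hnull : volume ({x | f x ≠ 0} ∩ Δ) = 0 := by
    have h := ae_iff.1 haez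
    rwa [Measure.restrict_apply' hΔmeas] at h
  obtain ⟨B, hAB, hBmeas, hB0⟩ := exists_measurable_superset_of_null hnull
  -- Step E : conclusion
  intro lam hlam
  obtain ⟨r, hr, hball⟩ := Metric.isOpen_iff.1 isOpen_interior lam hlam
  have hballΔ : Metric.ball lam r ⊆ Δ := hball.trans interior_subset
  set T : EuclideanSpace ℝ (Fin N) → EuclideanSpace ℝ (Fin N) :=
    fun x => (2:ℝ) • lam - x with hT
  have hTmp : MeasurePreserving T volume volume := by
    have h1 : MeasurePreserving (fun x : EuclideanSpace ℝ (Fin N) => -x) volume volume :=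
      Measure.measurePreserving_neg volume
    have h2 : MeasurePreserving
        (fun x : EuclideanSpace ℝ (Fin N) => (2:ℝ) • lam + x) volume volume :=
      measurePreserving_add_left volume ((2:ℝ) • lam)
    have : T = (fun x : EuclideanSpace ℝ (Fin N) => (2:ℝ) • lam + x) ∘
        (fun x => -x) := by
      funext x; simp [hT, sub_eq_add_neg]
    rw [this]
    exact h2.comp h1
  have hTB : volume (T ⁻¹' B) = 0 := by
    rw [hTmp.measure_preimage hBmeas.nullMeasurableSet]
    exact hB0
  have hSpos : 0 < volume (Metric.ball lam r \ (B ∪ T ⁻¹' B)) := by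
    have hU0 : volume (B ∪ T ⁻¹' B) = 0 := measure_union_null hB0 hTB
    rw [measure_diff_null hU0]
    exact Metric.measure_ball_pos volume lam hr
  obtain ⟨x, hx⟩ := nonempty_of_measure_ne_zero hSpos.ne'
  obtain ⟨hxball, hxnB⟩ := hx
  have hxnB1 : x ∉ B := fun h => hxnB (Or.inl h)
  have hxnB2 : T x ∉ B := fun h => hxnB (Or.inr h)
  have hxΔ : x ∈ Δ := hballΔ hxball
  have hTxball : T x ∈ Metric.ball lam r := by
    rw [Metric.mem_ball] at hxball ⊢
    have : dist (T x) lam = dist x lam := by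
      rw [dist_eq_norm, dist_eq_norm, hT]
      have h : (2:ℝ) • lam - x - lam = -(x - lam) := by module
      rw [h, norm_neg]
    rwa [this]
  have hTxΔ : T x ∈ Δ := hballΔ hTxball
  have hfx : f x = 0 := by
    by_contra h
    exact hxnB1 (hAB ⟨h, hxΔ⟩)
  have hfTx : f (T x) = 0 := by
    by_contra h
    exact hxnB2 (hAB ⟨h, hTxΔ⟩)
  have hmid : (1/2:ℝ) • x + (1/2:ℝ) • (T x) = lam := by
    rw [hT]; module
  have hconc := hfconc.2 hxΔ hTxΔ (by norm_num : (0:ℝ) ≤ 1/2)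
    (by norm_num : (0:ℝ) ≤ 1/2) (by norm_num : (1/2:ℝ) + 1/2 = 1)
  rw [hmid, hfx, hfTx] at hconc
  simp only [smul_zero, add_zero, smul_eq_mul, mul_zero] at hconc
  have hle0 : f lam ≤ 0 := hfle lam (interior_subset hlam)
  linarith
end

section
/- Let E be a finite-dimensional real inner product space, let S ⊆ E be a finite set, and define π : E → ℝ by π(λ) := ∏_{α ∈ S} ⟨α, λ⟩. Let σ : E → E be a linear isometry with σ(S) = S. Then for every λ ∈ E with σ(λ) = λ and every v ∈ E with σ(v) = −v, the derivative of π at λ annihilates v; equivalently ⟨∇π(λ), v⟩ = 0. -/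
open scoped RealInnerProductSpace

/-- symmetry argument in the proof of the paper's Proposition 5.1.
Let `π(λ) = ∏_{α ∈ S} ⟨α, λ⟩` for a finite set `S` in a finite-dimensional real inner
product space, and let `σ` be a linear isometry with `σ(S) = S`. Then for every `λ`
fixed by `σ` and every `v` with `σ(v) = -v`, one has `⟨∇π(λ), v⟩ = 0`. -/
theorem stmt11 (E : Type*) [NormedAddCommGroup E] [InnerProductSpace ℝ E]
    [FiniteDimensional ℝ E]
    (S : Finset E) (piF : E → ℝ)
    (hpi : ∀ lam, piF lam = ∏ α ∈ S, ⟪α, lam⟫)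
    (σ : E ≃ₗᵢ[ℝ] E) (hσS : (σ : E → E) '' (S : Set E) = (S : Set E))
    (lam : E) (hlam : σ lam = lam) (v : E) (hv : σ v = -v) :
    ⟪gradient piF lam, v⟫ = 0 := by
  classical
  -- σ-invariance of piF
  have hinv : ∀ x : E, piF (σ x) = piF x := by
    intro x
    rw [hpi, hpi]
    refine (Finset.prod_bij (fun a _ => σ a) ?_ ?_ ?_ ?_).symm
    · intro a ha
      have : σ a ∈ ((σ : E → E) '' (S : Set E)) := ⟨a, ha, rfl⟩
      rw [hσS] at this
      exact this
    · intro a _ b _ h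
      exact σ.injective h
    · intro b hb
      have : (b : E) ∈ ((σ : E → E) '' (S : Set E)) := by rw [hσS]; exact hb
      obtain ⟨a, haS, ha⟩ := this
      exact ⟨a, haS, ha⟩
    · intro a _
      exact (σ.inner_map_map a x).symm
  -- differentiability of piF
  have hdiff : ∀ x : E, DifferentiableAt ℝ piF x := by
    intro x
    have : DifferentiableAt ℝ (fun y : E => ∏ α ∈ S, ⟪α, y⟫) x := by
      have := HasFDerivAt.finset_prod (u := S) (g := fun α (y : E) => ⟪α, y⟫)
        (g' := fun α => innerSL ℝ α) (x := x)
        (fun α _ => (innerSL ℝ α).hasFDerivAt)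
      exact this.differentiableAt
    exact this.congr_of_eventuallyEq (Filter.Eventually.of_forall fun y => hpi y)
  -- fderiv of piF ∘ σ at lam
  have hcomp : fderiv ℝ (piF ∘ σ) lam
      = (fderiv ℝ piF (σ lam)).comp (σ : E →L[ℝ] E) := by
    rw [fderiv_comp lam (hdiff (σ lam)) (σ.toContinuousLinearEquiv.differentiableAt)]
    congr 1
    exact σ.toContinuousLinearEquiv.fderiv
  have hfun : piF ∘ σ = piF := funext hinv
  rw [hfun, hlam] at hcomp
  have key := DFunLike.congr_fun hcomp v
  simp only [ContinuousLinearMap.comp_apply] at key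
  have hσv : ((σ : E →L[ℝ] E) : E → E) v = σ v := rfl
  rw [hσv, hv] at key
  simp only [map_neg] at key
  have h0 : fderiv ℝ piF lam v = 0 := by linarith
  rw [gradient, InnerProductSpace.toDual_symm_apply, h0]
end
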